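/- arXiv:1712.09563 — 9 statements merged into one kernel-verified Lean document; each statement's English description precedes it below -/
import Mathlib

section
/- Let G be a finite unitary reflection group on a finite-dimensional complex inner product space V, let P = G(X) be the pointwise stabiliser of a subset X of V, and let U = Fix_V(P) be the fixed point space of P. Then P equals the pointwise stabiliser G(U) of U. -/
open Module Submodule

variable {V : Type*} [NormedAddCommGroup V] [InnerProductSpace ℂ V] [FiniteDimensional ℂ V]

/-- The pointwise stabiliser in `G` of a set `X ⊆ V`. -/
def pointStab (G : Subgroup (V ≃ₗᵢ[ℂ] V)) (X : Set V) : Subgroup (V ≃ₗᵢ[ℂ] V) where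
  carrier := {g | g ∈ G ∧ ∀ x ∈ X, g x = x}
  one_mem' := ⟨G.one_mem, fun x _ => rfl⟩
  mul_mem' := by
    rintro a b ⟨ha, ha'⟩ ⟨hb, hb'⟩
    refine ⟨G.mul_mem ha hb, fun x hx => ?_⟩
    have : (a * b) x = a (b x) := rfl
    rw [this, hb' x hx, ha' x hx]
  inv_mem' := by
    rintro a ⟨ha, ha'⟩
    refine ⟨G.inv_mem ha, fun x hx => ?_⟩
    have h1 : a⁻¹ (a x) = x := a.symm_apply_apply x
    rw [ha' x hx] at h1
    exact h1

/-- The subspace of vectors fixed by every element of `P`. -/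
def fixedSpace (P : Subgroup (V ≃ₗᵢ[ℂ] V)) : Submodule ℂ V where
  carrier := {v | ∀ g ∈ P, g v = v}
  zero_mem' := fun g _ => map_zero g
  add_mem' := fun ha hb g hg => by rw [map_add, ha g hg, hb g hg]
  smul_mem' := fun c v hv g hg => by rw [map_smul, hv g hg]

/-- The subspace of vectors fixed by a single unitary transformation. -/
def fixedBy (g : V ≃ₗᵢ[ℂ] V) : Submodule ℂ V where
  carrier := {v | g v = v}
  zero_mem' := map_zero g
  add_mem' := fun ha hb => by rw [Set.mem_setOf] at *; rw [map_add, ha, hb]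
  smul_mem' := fun c v hv => by rw [Set.mem_setOf] at *; rw [map_smul, hv]

/-- A unitary reflection: a transformation of finite order whose fixed subspace
is a hyperplane. -/
def IsReflection (g : V ≃ₗᵢ[ℂ] V) : Prop :=
  IsOfFinOrder g ∧ finrank ℂ (fixedBy g) = finrank ℂ V - 1

/-- `G` is a unitary reflection group if it is generated by its reflections. -/
def IsReflectionGroup (G : Subgroup (V ≃ₗᵢ[ℂ] V)) : Prop :=
  Subgroup.closure {g | g ∈ G ∧ IsReflection g} = G

/-- The setwise stabiliser in `G` of a subset `U ⊆ V`. -/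
def setStab (G : Subgroup (V ≃ₗᵢ[ℂ] V)) (U : Set V) : Subgroup (V ≃ₗᵢ[ℂ] V) where
  carrier := {g | g ∈ G ∧ ∀ v, v ∈ U ↔ g v ∈ U}
  one_mem' := ⟨G.one_mem, fun v => Iff.rfl⟩
  mul_mem' := by
    rintro a b ⟨ha, ha'⟩ ⟨hb, hb'⟩
    refine ⟨G.mul_mem ha hb, fun v => ?_⟩
    have : (a * b) v = a (b v) := rfl
    rw [this, ← ha' (b v), ← hb' v]
  inv_mem' := by
    rintro a ⟨ha, ha'⟩
    refine ⟨G.inv_mem ha, fun v => ?_⟩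
    have h1 : a (a⁻¹ v) = v := a.apply_symm_apply v
    have := ha' (a⁻¹ v)
    rw [h1] at this
    exact this.symm

/-- The normaliser of `P` in `G`. -/
def normIn (G P : Subgroup (V ≃ₗᵢ[ℂ] V)) : Subgroup (V ≃ₗᵢ[ℂ] V) :=
  G ⊓ Subgroup.normalizer (P : Set (V ≃ₗᵢ[ℂ] V))

/-- if `P = G(X)` is the pointwise stabiliser of a subset `X ⊆ V` in a
finite unitary reflection group `G`, and `U = Fix_V(P)`, then `P = G(U)`. -/
theorem pointStab_eq_pointStab_fixedSpace
    (G : Subgroup (V ≃ₗᵢ[ℂ] V)) [Finite G] (hG : IsReflectionGroup G)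
    (X : Set V) (P : Subgroup (V ≃ₗᵢ[ℂ] V)) (hP : P = pointStab G X) :
    P = pointStab G (fixedSpace P : Set V) := by
  apply le_antisymm
  · intro g hg
    refine ⟨(hP ▸ hg : g ∈ pointStab G X).1, fun v hv => hv g hg⟩
  · intro g hg
    rw [hP]
    refine ⟨hg.1, fun x hx => hg.2 x ?_⟩
    -- x ∈ fixedSpace P since every element of P fixes x
    intro p hp
    exact (hP ▸ hp : p ∈ pointStab G X).2 x hx
end

section
/- Let G be a finite unitary reflection group on V and let P be a parabolic subgroup of G with fixed point space U = Fix_V(P). Then the normaliser N_G(P) of P in G equals the setwise stabiliser G_U = {g in G : g(U) = U}. -/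
open Module Submodule

variable {V : Type*} [NormedAddCommGroup V] [InnerProductSpace ℂ V] [FiniteDimensional ℂ V]

/-- the normaliser of a parabolic subgroup `P` of a finite unitary
reflection group `G` equals the setwise stabiliser of `U = Fix_V(P)`. -/
theorem normalizer_parabolic_eq_setStab_fixedSpace
    (G : Subgroup (V ≃ₗᵢ[ℂ] V)) [Finite G] (hG : IsReflectionGroup G)
    (P : Subgroup (V ≃ₗᵢ[ℂ] V)) (hP : ∃ X : Set V, P = pointStab G X) :
    normIn G P = setStab G (fixedSpace P : Set V) := by
  obtain ⟨X, hPX⟩ := hP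
  -- X ⊆ fixedSpace P
  have hXU : ∀ x ∈ X, x ∈ (fixedSpace P : Set V) := by
    intro x hx h hh
    rw [hPX] at hh
    exact hh.2 x hx
  -- key: P = pointwise stabiliser of its fixed space
  have hkey : ∀ g : V ≃ₗᵢ[ℂ] V,
      g ∈ P ↔ g ∈ G ∧ ∀ v ∈ (fixedSpace P : Set V), g v = v := by
    intro g
    constructor
    · intro hg
      have hgG : g ∈ G := by rw [hPX] at hg; exact hg.1
      exact ⟨hgG, fun v hv => hv g hg⟩
    · rintro ⟨hgG, hfix⟩
      rw [hPX]
      exact ⟨hgG, fun x hx => hfix x (hXU x hx)⟩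
  ext g
  have gaps : ∀ x, g (g⁻¹ x) = x := fun x => g.apply_symm_apply x
  have gspa : ∀ x, g⁻¹ (g x) = x := fun x => g.symm_apply_apply x
  constructor
  · rintro ⟨hgG, hn⟩
    have hn' : g ∈ Subgroup.normalizer (P : Set (V ≃ₗᵢ[ℂ] V)) := hn
    rw [Subgroup.mem_normalizer_iff] at hn'
    refine ⟨hgG, fun v => ?_⟩
    constructor
    · intro hv h hh
      have h2 : g⁻¹ * h * g ∈ P := by
        have := (hn' (g⁻¹ * h * g)).mpr
        apply this
        have : g * (g⁻¹ * h * g) * g⁻¹ = h := by group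
        rw [this]; exact hh
      have h3 : (g⁻¹ * h * g) v = v := hv _ h2
      have h4 : (g⁻¹ * h * g) v = g⁻¹ (h (g v)) := rfl
      rw [h4] at h3
      have := congrArg g h3
      rwa [gaps] at this
    · intro hv h hh
      have h2 : g * h * g⁻¹ ∈ P := (hn' h).mp hh
      have h3 : (g * h * g⁻¹) (g v) = g v := hv _ h2
      have h4 : (g * h * g⁻¹) (g v) = g (h (g⁻¹ (g v))) := rfl
      rw [h4, gspa] at h3
      exact g.injective h3
  · rintro ⟨hgG, hs⟩
    refine ⟨hgG, ?_⟩
    show g ∈ Subgroup.normalizer (P : Set (V ≃ₗᵢ[ℂ] V))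
    rw [Subgroup.mem_normalizer_iff]
    intro h
    rw [hkey h, hkey (g * h * g⁻¹)]
    constructor
    · rintro ⟨hhG, hfix⟩
      refine ⟨G.mul_mem (G.mul_mem hgG hhG) (G.inv_mem hgG), fun v hv => ?_⟩
      have h1 : g⁻¹ v ∈ (fixedSpace P : Set V) := by
        have := hs (g⁻¹ v)
        rw [gaps] at this
        exact this.mpr hv
      have h2 : (g * h * g⁻¹) v = g (h (g⁻¹ v)) := rfl
      rw [h2, hfix _ h1, gaps]
    · rintro ⟨hhG, hfix⟩
      have hhG' : h ∈ G := by
        have := G.mul_mem (G.mul_mem (G.inv_mem hgG) hhG) hgG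
        have e : g⁻¹ * (g * h * g⁻¹) * g = h := by group
        rwa [e] at this
      refine ⟨hhG', fun v hv => ?_⟩
      have h1 : g v ∈ (fixedSpace P : Set V) := (hs v).mp hv
      have h2 : (g * h * g⁻¹) (g v) = g (h v) := by
        have : (g * h * g⁻¹) (g v) = g (h (g⁻¹ (g v))) := rfl
        rw [this, gspa]
      have h3 := hfix _ h1
      rw [h2] at h3
      have := congrArg (g⁻¹ : V ≃ₗᵢ[ℂ] V) h3
      rwa [gspa, gspa] at this
end

section
/- Let G be a finite unitary reflection group on V and P a parabolic subgroup with fixed point space U. Then N_G(P) equals the setwise stabiliser of the orthogonal complement U^perp of U in V. -/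
open Module Submodule

variable {V : Type*} [NormedAddCommGroup V] [InnerProductSpace ℂ V] [FiniteDimensional ℂ V]

/-- A unitary map stabilising a subspace `U` stabilises `Uᗮ`. -/
lemma stab_orth (g : V ≃ₗᵢ[ℂ] V) (U : Submodule ℂ V)
    (h : ∀ v, v ∈ U ↔ g v ∈ U) : ∀ v, v ∈ Uᗮ ↔ g v ∈ Uᗮ := by
  intro v
  constructor
  · intro hv
    rw [Submodule.mem_orthogonal]
    intro u hu
    have h1 : g.symm u ∈ U := by
      rw [h (g.symm u)]
      simpa using hu
    have h2 : (inner ℂ u (g v) : ℂ) = inner ℂ (g.symm u) v := by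
      conv_lhs => rw [show u = g (g.symm u) from (g.apply_symm_apply u).symm]
      exact g.inner_map_map _ _
    rw [h2]
    exact hv _ h1
  · intro hv
    rw [Submodule.mem_orthogonal]
    intro u hu
    have h1 : g u ∈ U := (h u).mp hu
    have h2 : (inner ℂ u v : ℂ) = inner ℂ (g u) (g v) := (g.inner_map_map _ _).symm
    rw [h2]
    exact hv _ h1

/-- the normaliser of a parabolic subgroup `P` of a finite unitary
reflection group `G` equals the setwise stabiliser of the orthogonal complement
`U^⊥` of `U = Fix_V(P)`. -/
theorem normalizer_parabolic_eq_setStab_orthogonal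
    (G : Subgroup (V ≃ₗᵢ[ℂ] V)) [Finite G] (hG : IsReflectionGroup G)
    (P : Subgroup (V ≃ₗᵢ[ℂ] V)) (hP : ∃ X : Set V, P = pointStab G X) :
    normIn G P = setStab G ((fixedSpace P)ᗮ : Set V) := by
  obtain ⟨X, hX⟩ := hP
  set U := fixedSpace P with hU
  -- P is the pointwise stabiliser of its fixed space U
  have hPU : ∀ h : V ≃ₗᵢ[ℂ] V, h ∈ P ↔ h ∈ G ∧ ∀ u ∈ U, h u = u := by
    intro h
    constructor
    · intro hh
      have hh' : h ∈ pointStab G X := hX ▸ hh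
      exact ⟨hh'.1, fun u hu => hu h hh⟩
    · rintro ⟨hhG, hfix⟩
      rw [hX]
      refine ⟨hhG, fun x hx => hfix x ?_⟩
      intro p hp
      have hp' : p ∈ pointStab G X := hX ▸ hp
      exact hp'.2 x hx
  ext g
  simp only [normIn, Subgroup.mem_inf, setStab, Subgroup.mem_mk, Set.mem_setOf_eq,
    SetLike.mem_coe]
  constructor
  · rintro ⟨hgG, hgn⟩
    have hn := Subgroup.mem_normalizer_iff.mp hgn
    have hgU : ∀ v, v ∈ U ↔ g v ∈ U := by
      intro v
      constructor
      · intro hv p hp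
        have hc : g⁻¹ * p * g ∈ P := by
          have := (hn (g⁻¹ * p * g)).mpr
          apply this
          have : g * (g⁻¹ * p * g) * g⁻¹ = p := by group
          rw [this]; exact hp
        have h1 : p (g v) = g ((g⁻¹ * p * g) v) := by
          have he : (g⁻¹ * p * g) v = g⁻¹ (p (g v)) := rfl
          rw [he]
          exact (g.apply_symm_apply (p (g v))).symm
        rw [h1, hv _ hc]
      · intro hv p hp
        have hc : g * p * g⁻¹ ∈ P := (hn p).mp hp
        have h1 : (g * p * g⁻¹) (g v) = g (p v) := by
          have : (g * p * g⁻¹) (g v) = g (p (g⁻¹ (g v))) := rfl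
          rw [this]
          congr 1
          exact congrArg p (g.symm_apply_apply v)
        have h2 := hv _ hc
        rw [h1] at h2
        exact g.injective h2
    exact ⟨hgG, stab_orth g U hgU⟩
  · rintro ⟨hgG, hgO⟩
    refine ⟨hgG, ?_⟩
    have hgU : ∀ v, v ∈ U ↔ g v ∈ U := by
      have h2 := stab_orth g Uᗮ hgO
      simpa [Submodule.orthogonal_orthogonal] using h2
    rw [Subgroup.mem_normalizer_iff]
    intro h
    rw [hPU h, hPU (g * h * g⁻¹)]
    constructor
    · rintro ⟨hhG, hfix⟩
      refine ⟨mul_mem (mul_mem hgG hhG) (inv_mem hgG), fun u hu => ?_⟩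
      have hu' : g⁻¹ u ∈ U := by
        rw [hgU (g⁻¹ u)]
        simpa using hu
      have : (g * h * g⁻¹) u = g (h (g⁻¹ u)) := rfl
      rw [this, hfix _ hu']
      exact g.apply_symm_apply u
    · rintro ⟨hhG, hfix⟩
      have hhG' : h ∈ G := by
        have : h = g⁻¹ * (g * h * g⁻¹) * g := by group
        rw [this]
        exact mul_mem (mul_mem (inv_mem hgG) hhG) hgG
      refine ⟨hhG', fun u hu => ?_⟩
      have hgu : g u ∈ U := (hgU u).mp hu
      have h1 := hfix _ hgu
      have h2 : (g * h * g⁻¹) (g u) = g (h u) := by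
        have : (g * h * g⁻¹) (g u) = g (h (g⁻¹ (g u))) := rfl
        rw [this]
        congr 1
        exact congrArg h (g.symm_apply_apply u)
      rw [h2] at h1
      exact g.injective h1
end

section
/- If P_{(0,λ)}^α and P_{(0,λ)}^β are the conjugates of the standard parabolic subgroup P_{(0,λ)} of G(m,p,n) by the diagonal matrices diag(α,1,...,1) and diag(β,1,...,1) with α,β m-th roots of unity, then P_{(0,λ)}^α and P_{(0,λ)}^β are conjugate in G(m,p,n) if and only if αβ^{-1} is an (m/e)-th root of unity, where e = gcd(p, n_1, ..., n_d) and n_1,...,n_d are the parts of λ. -/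
open Module Submodule

noncomputable section

lemma euclid_single_eq_smul {n : ℕ} (j : Fin n) (c : ℂ) :
    EuclideanSpace.single j c = c • EuclideanSpace.single j (1 : ℂ) := by
  ext t
  by_cases h : t = j <;>
    simp [EuclideanSpace.single_apply, h]

/-- The imprimitive unitary reflection group `G(m,p,n)`: monomial transformations of
`ℂ^n` whose nonzero entries are `m`-th roots of unity with product an `(m/p)`-th root
of unity. -/
def Gmpn (m p n : ℕ) :
    Subgroup (EuclideanSpace ℂ (Fin n) ≃ₗᵢ[ℂ] EuclideanSpace ℂ (Fin n)) where
  carrier := {g | ∃ (σ : Equiv.Perm (Fin n)) (θ : Fin n → ℂˣ),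
    (∀ i, (θ i : ℂ) ^ m = 1) ∧ (∏ i, (θ i : ℂ)) ^ (m / p) = 1 ∧
    ∀ i, g (EuclideanSpace.single i 1) = EuclideanSpace.single (σ i) (θ i : ℂ)}
  one_mem' := ⟨1, 1, by simp, by simp, fun i => by simp⟩
  mul_mem' := by
    rintro a b ⟨σa, θa, h1a, h2a, h3a⟩ ⟨σb, θb, h1b, h2b, h3b⟩
    refine ⟨σa * σb, fun i => θa (σb i) * θb i, fun i => by
        rw [Units.val_mul, mul_pow, h1a, h1b, one_mul], ?_, fun i => ?_⟩
    · have h : (∏ i, ((θa (σb i) * θb i : ℂˣ) : ℂ)) =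
          (∏ i, (θa i : ℂ)) * ∏ i, (θb i : ℂ) := by
        simp only [Units.val_mul, Finset.prod_mul_distrib]
        rw [Equiv.prod_comp σb fun i => (θa i : ℂ)]
      rw [h, mul_pow, h2a, h2b, one_mul]
    · have h : (a * b) (EuclideanSpace.single i 1) = a (b (EuclideanSpace.single i 1)) := rfl
      rw [h, h3b i, euclid_single_eq_smul, map_smul, h3a]
      ext t
      by_cases ht : t = σa (σb i) <;>
        simp [EuclideanSpace.single_apply, Equiv.Perm.mul_apply, ht, mul_comm]
  inv_mem' := by
    rintro a ⟨σ, θ, h1, h2, h3⟩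
    refine ⟨σ⁻¹, fun i => (θ (σ⁻¹ i))⁻¹, fun i => by
        simp only [Units.val_inv_eq_inv_val, inv_pow, h1, inv_one], ?_, fun i => ?_⟩
    · have h : (∏ i, (((θ (σ⁻¹ i))⁻¹ : ℂˣ) : ℂ)) = (∏ i, (θ i : ℂ))⁻¹ := by
        simp only [Units.val_inv_eq_inv_val]
        rw [Equiv.prod_comp σ⁻¹ fun i => ((θ i : ℂ))⁻¹, Finset.prod_inv_distrib]
      rw [h, inv_pow, h2, inv_one]
    · have key := h3 (σ⁻¹ i)
      rw [show σ (σ⁻¹ i) = i from σ.apply_symm_apply i] at key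
      have h4 : a⁻¹ (EuclideanSpace.single i ((θ (σ⁻¹ i) : ℂ))) =
          EuclideanSpace.single (σ⁻¹ i) 1 := by
        rw [← key]; exact a.symm_apply_apply _
      have h5 : ((θ (σ⁻¹ i) : ℂ))⁻¹ • a⁻¹ (EuclideanSpace.single i ((θ (σ⁻¹ i) : ℂ)))
          = a⁻¹ (EuclideanSpace.single i (1 : ℂ)) := by
        rw [euclid_single_eq_smul i, map_smul, smul_smul,
          inv_mul_cancel₀ (Units.ne_zero (θ (σ⁻¹ i))), one_smul]
      rw [← h5, h4, ← euclid_single_eq_smul]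
      simp [Units.val_inv_eq_inv_val]


variable {V : Type*} [NormedAddCommGroup V] [InnerProductSpace ℂ V] [FiniteDimensional ℂ V]

/-- The `i`-th consecutive block of basis indices determined by `n₀` and the parts of `l`. -/
def stdBlock (n₀ : ℕ) (l : List ℕ) (n : ℕ) (i : ℕ) : Finset (Fin n) :=
  Finset.univ.filter fun j => n₀ + (l.take i).sum ≤ j.val ∧ j.val < n₀ + (l.take (i + 1)).sum

/-- The sum of the basis vectors in the `i`-th block. -/
def stdVec (n₀ : ℕ) (l : List ℕ) (n : ℕ) (i : ℕ) : EuclideanSpace ℂ (Fin n) :=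
  ∑ j ∈ stdBlock n₀ l n i, EuclideanSpace.single j (1 : ℂ)

/-- The standard parabolic subgroup `P_{(n₀,λ)}` of `G(m,p,n)`: the pointwise stabiliser of
the span of the block sums. -/
def stdParabolic (m p n n₀ : ℕ) (l : List ℕ) :
    Subgroup (EuclideanSpace ℂ (Fin n) ≃ₗᵢ[ℂ] EuclideanSpace ℂ (Fin n)) :=
  pointStab (Gmpn m p n)
    (Submodule.span ℂ (Set.range fun i : Fin l.length => stdVec n₀ l n i) : Set _)

lemma norm_one_ne_zero {c : ℂ} (hc : ‖c‖ = 1) : c ≠ 0 := by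
  intro h0; rw [h0] at hc; simp at hc

/-- monomial isometry sending `single j x` to `single (σ j) (c j * x)`. -/
def monoIso {n : ℕ} (σ : Equiv.Perm (Fin n)) (c : Fin n → ℂ) (hc : ∀ i, ‖c i‖ = 1) :
    EuclideanSpace ℂ (Fin n) ≃ₗᵢ[ℂ] EuclideanSpace ℂ (Fin n) where
  toLinearEquiv :=
  { toFun := fun v => WithLp.toLp 2 (fun t => c (σ.symm t) * v (σ.symm t))
    invFun := fun v => WithLp.toLp 2 (fun j => (c j)⁻¹ * v (σ j))
    map_add' := fun u v => by ext t; simp [mul_add]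
    map_smul' := fun a v => by
      ext t
      simp only [PiLp.toLp_apply, PiLp.smul_apply, smul_eq_mul, RingHom.id_apply]
      ring
    left_inv := fun v => by
      ext j
      simp only [PiLp.toLp_apply, Equiv.symm_apply_apply]
      rw [inv_mul_cancel_left₀ (norm_one_ne_zero (hc j))]
    right_inv := fun v => by
      ext t
      simp only [PiLp.toLp_apply, Equiv.apply_symm_apply]
      rw [mul_inv_cancel_left₀ (norm_one_ne_zero (hc (σ.symm t)))] }
  norm_map' := fun v => by
    simp only [LinearEquiv.coe_mk]
    rw [EuclideanSpace.norm_eq, EuclideanSpace.norm_eq]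
    simp only [PiLp.toLp_apply]
    congr 1
    rw [← Equiv.sum_comp σ.symm (fun j => ‖v j‖ ^ 2)]
    refine Finset.sum_congr rfl fun t _ => ?_
    show ‖c (σ.symm t) * v (σ.symm t)‖ ^ 2 = _
    rw [norm_mul, hc, one_mul]

lemma monoIso_apply {n : ℕ} (σ : Equiv.Perm (Fin n)) (c : Fin n → ℂ) (hc : ∀ i, ‖c i‖ = 1)
    (v : EuclideanSpace ℂ (Fin n)) (t : Fin n) :
    monoIso σ c hc v t = c (σ.symm t) * v (σ.symm t) := rfl

lemma monoIso_single {n : ℕ} (σ : Equiv.Perm (Fin n)) (c : Fin n → ℂ) (hc : ∀ i, ‖c i‖ = 1)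
    (j : Fin n) (x : ℂ) :
    monoIso σ c hc (EuclideanSpace.single j x) = EuclideanSpace.single (σ j) (c j * x) := by
  ext t
  rw [monoIso_apply]
  by_cases h : t = σ j
  · subst h; simp [EuclideanSpace.single_apply]
  · have h2 : σ.symm t ≠ j := fun hh => h (by rw [← hh, Equiv.apply_symm_apply])
    simp [EuclideanSpace.single_apply, h, h2]

/-- partial sums of take are monotone -/
lemma sum_take_mono (l : List ℕ) {i j : ℕ} (h : i ≤ j) : (l.take i).sum ≤ (l.take j).sum := by
  have : l.take i = (l.take j).take i := by rw [List.take_take, Nat.min_eq_left h]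
  rw [this]
  conv_rhs => rw [← List.take_append_drop i (l.take j)]
  rw [List.sum_append]
  exact Nat.le_add_right _ _

section blocks
variable (l : List ℕ) (n : ℕ)

lemma mem_stdBlock {i : ℕ} {j : Fin n} :
    j ∈ stdBlock 0 l n i ↔ (l.take i).sum ≤ j.val ∧ j.val < (l.take (i+1)).sum := by
  simp [stdBlock]

lemma stdBlock_disjoint {i i' : ℕ} (h : i ≠ i') :
    Disjoint (stdBlock 0 l n i) (stdBlock 0 l n i') := by
  wlog hlt : i < i' generalizing i i'
  · exact (this h.symm (by omega)).symm
  rw [Finset.disjoint_left]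
  intro j hj hj'
  rw [mem_stdBlock] at hj hj'
  have : (l.take (i+1)).sum ≤ (l.take i').sum := sum_take_mono l (by omega)
  omega

lemma exists_unique_block (hsum : l.sum = n) (t : Fin n) :
    ∃! i : Fin l.length, t ∈ stdBlock 0 l n i := by
  have hex : ∃ k, t.val < (l.take (k+1)).sum := by
    refine ⟨l.length, ?_⟩
    rw [List.take_of_length_le (by omega), hsum]
    exact t.isLt
  set k := Nat.find hex with hk
  have hklt : t.val < (l.take (k+1)).sum := Nat.find_spec hex
  have hkle : (l.take k).sum ≤ t.val := by
    rcases Nat.eq_zero_or_pos k with h0 | h0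
    · simp [h0]
    · have := Nat.find_min hex (m := k - 1) (by omega)
      have hk1 : k - 1 + 1 = k := by omega
      rw [hk1] at this
      omega
  have hkd : k < l.length := by
    by_contra hge
    rw [List.take_of_length_le (by omega), hsum] at hkle
    exact absurd t.isLt (by omega)
  refine ⟨⟨k, hkd⟩, (mem_stdBlock l n).mpr ⟨hkle, hklt⟩, ?_⟩
  rintro ⟨i, hi⟩ hmem
  by_contra hne
  have := stdBlock_disjoint l n (i := i) (i' := k) (by simpa [Fin.ext_iff] using hne)
  rw [Finset.disjoint_left] at this
  exact this hmem ((mem_stdBlock l n).mpr ⟨hkle, hklt⟩)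

/-- index of the block containing `t` -/
def blockIdx (hsum : l.sum = n) (t : Fin n) : Fin l.length :=
  (exists_unique_block l n hsum t).exists.choose

lemma mem_blockIdx (hsum : l.sum = n) (t : Fin n) :
    t ∈ stdBlock 0 l n (blockIdx l n hsum t) :=
  (exists_unique_block l n hsum t).exists.choose_spec

lemma blockIdx_eq (hsum : l.sum = n) {t : Fin n} {i : Fin l.length}
    (h : t ∈ stdBlock 0 l n i) : blockIdx l n hsum t = i := by
  rcases exists_unique_block l n hsum t with ⟨j, hj, huniq⟩
  rw [huniq _ (mem_blockIdx l n hsum t), huniq _ h]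

lemma univ_eq_biUnion_blocks (hsum : l.sum = n) :
    (Finset.univ : Finset (Fin n)) =
      Finset.univ.biUnion (fun i : Fin l.length => stdBlock 0 l n i) := by
  ext t
  simp only [Finset.mem_univ, Finset.mem_biUnion, true_iff]
  exact ⟨blockIdx l n hsum t, trivial, mem_blockIdx l n hsum t⟩

lemma card_stdBlock (hsum : l.sum = n) (i : Fin l.length) :
    (stdBlock 0 l n i).card = l.get i := by
  have hle : (l.take (i.val+1)).sum ≤ n := by
    rw [← hsum]
    conv_rhs => rw [← List.take_of_length_le (le_refl l.length)]
    exact sum_take_mono l (by omega)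
  have himg : (stdBlock 0 l n i).image Fin.val =
      Finset.Ico ((l.take i.val).sum) ((l.take (i.val+1)).sum) := by
    ext a
    simp only [Finset.mem_image, Finset.mem_Ico]
    constructor
    · rintro ⟨j, hj, rfl⟩
      exact (mem_stdBlock l n).mp hj
    · rintro ⟨h1, h2⟩
      exact ⟨⟨a, by omega⟩, (mem_stdBlock l n).mpr ⟨h1, h2⟩, rfl⟩
  have hcard := congrArg Finset.card himg
  rw [Finset.card_image_of_injective _ Fin.val_injective, Nat.card_Ico] at hcard
  rw [hcard, List.sum_take_succ _ _ i.isLt, List.get_eq_getElem]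
  omega

end blocks



section spanfix
variable {n : ℕ}

lemma fixes_span {g : EuclideanSpace ℂ (Fin n) ≃ₗᵢ[ℂ] EuclideanSpace ℂ (Fin n)}
    {s : Set (EuclideanSpace ℂ (Fin n))} (h : ∀ x ∈ s, g x = x) :
    ∀ u ∈ Submodule.span ℂ s, g u = u := by
  intro u hu
  induction hu using Submodule.span_induction with
  | mem x hx => exact h x hx
  | zero => exact map_zero g
  | add x y _ _ hx hy => rw [map_add, hx, hy]
  | smul a x _ hx => rw [map_smul, hx]

lemma maps_span {g : EuclideanSpace ℂ (Fin n) ≃ₗᵢ[ℂ] EuclideanSpace ℂ (Fin n)}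
    {s : Set (EuclideanSpace ℂ (Fin n))} (h : ∀ x ∈ s, g x ∈ Submodule.span ℂ s) :
    ∀ u ∈ Submodule.span ℂ s, g u ∈ Submodule.span ℂ s := by
  intro u hu
  induction hu using Submodule.span_induction with
  | mem x hx => exact h x hx
  | zero => rw [map_zero]; exact Submodule.zero_mem _
  | add x y _ _ hx hy => rw [map_add]; exact Submodule.add_mem _ hx hy
  | smul a x _ hx => rw [map_smul]; exact Submodule.smul_mem _ _ hx

end spanfix

lemma mem_Gmpn_iff {m p n : ℕ} (g : EuclideanSpace ℂ (Fin n) ≃ₗᵢ[ℂ] EuclideanSpace ℂ (Fin n)) :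
    g ∈ Gmpn m p n ↔ ∃ (σ : Equiv.Perm (Fin n)) (θ : Fin n → ℂˣ),
      (∀ i, (θ i : ℂ) ^ m = 1) ∧ (∏ i, (θ i : ℂ)) ^ (m / p) = 1 ∧
      ∀ i, g (EuclideanSpace.single i 1) = EuclideanSpace.single (σ i) (θ i : ℂ) := Iff.rfl

lemma mem_stdParabolic_iff {m p n n₀ : ℕ} {l : List ℕ}
    (g : EuclideanSpace ℂ (Fin n) ≃ₗᵢ[ℂ] EuclideanSpace ℂ (Fin n)) :
    g ∈ stdParabolic m p n n₀ l ↔ g ∈ Gmpn m p n ∧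
      ∀ x ∈ (Submodule.span ℂ
        (Set.range fun i : Fin l.length => stdVec n₀ l n i) : Set _), g x = x := Iff.rfl

lemma Gmpn_le_one {m p n : ℕ} {g : EuclideanSpace ℂ (Fin n) ≃ₗᵢ[ℂ] EuclideanSpace ℂ (Fin n)}
    (hg : g ∈ Gmpn m p n) : g ∈ Gmpn m 1 n := by
  obtain ⟨σ, θ, h1, h2, h3⟩ := hg
  refine ⟨σ, θ, h1, ?_, h3⟩
  rw [Nat.div_one, ← Finset.prod_pow]
  simp [h1]

lemma foldr_gcd_dvd : ∀ (l : List ℕ), ∀ x ∈ l, l.foldr Nat.gcd 0 ∣ x := by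
  intro l
  induction l with
  | nil => intro x hx; simp at hx
  | cons a l ih =>
    intro x hx
    rcases List.mem_cons.mp hx with rfl | hx
    · exact Nat.gcd_dvd_left _ _
    · exact dvd_trans (Nat.gcd_dvd_right _ _) (ih x hx)

lemma exists_bezout_list : ∀ (l : List ℕ), ∃ b : Fin l.length → ℤ,
    ((l.foldr Nat.gcd 0 : ℕ) : ℤ) = ∑ i, b i * (l.get i : ℤ) := by
  intro l
  induction l with
  | nil => exact ⟨fun i => 0, by simp⟩
  | cons a l ih =>
    obtain ⟨b, hb⟩ := ih
    set g := l.foldr Nat.gcd 0 with hg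
    refine ⟨Fin.cases (Nat.gcdA a g) (fun i => Nat.gcdB a g * b i), ?_⟩
    have hgcd := Nat.gcd_eq_gcd_ab a g
    have hfold : (a :: l).foldr Nat.gcd 0 = Nat.gcd a g := rfl
    rw [hfold]
    show _ = ∑ i : Fin (l.length + 1),
      (Fin.cases (Nat.gcdA a g) (fun i => Nat.gcdB a g * b i) i : ℤ) * (((a :: l).get i : ℕ) : ℤ)
    rw [Fin.sum_univ_succ]
    simp only [Fin.cases_zero, Fin.cases_succ, List.get_cons_succ]
    have hget0 : (((a :: l).get (0 : Fin (l.length + 1)) : ℕ) : ℤ) = (a : ℤ) := rfl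
    rw [hget0, hgcd, hb, Finset.sum_mul]
    rw [Finset.sum_congr rfl (fun i _ => by ring :
      ∀ i ∈ Finset.univ, (b i * ((l.get i : ℕ) : ℤ)) * Nat.gcdB a g
        = (Nat.gcdB a g * b i) * ((l.get i : ℕ) : ℤ))]
    have hgs : ∀ i : Fin l.length, (((a :: l).get i.succ : ℕ) : ℤ) = ((l.get i : ℕ) : ℤ) :=
      fun i => rfl
    simp only [hgs]
    ring


section swap
variable {l : List ℕ} {n : ℕ}

lemma block_eq_of_mem (hsum : l.sum = n) {i r : Fin l.length} {t : Fin n}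
    (hi : t ∈ stdBlock 0 l n i) (hr : t ∈ stdBlock 0 l n r) : i = r := by
  rw [← blockIdx_eq l n hsum hi, ← blockIdx_eq l n hsum hr]

lemma swap_mem_block (hsum : l.sum = n) {r : Fin l.length} {j k : Fin n}
    (hj : j ∈ stdBlock 0 l n r) (hk : k ∈ stdBlock 0 l n r)
    {i : Fin l.length} {t : Fin n} (ht : t ∈ stdBlock 0 l n i) :
    Equiv.swap j k t ∈ stdBlock 0 l n i := by
  by_cases htj : t = j
  · subst htj
    rw [Equiv.swap_apply_left]
    rwa [block_eq_of_mem hsum ht hj]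
  · by_cases htk : t = k
    · subst htk
      rw [Equiv.swap_apply_right]
      rwa [block_eq_of_mem hsum ht hk]
    · rwa [Equiv.swap_apply_of_ne_of_ne htj htk]

lemma swapIso_fixes_stdVec (hsum : l.sum = n) {r : Fin l.length} {j k : Fin n}
    (hj : j ∈ stdBlock 0 l n r) (hk : k ∈ stdBlock 0 l n r) (i : Fin l.length) :
    monoIso (Equiv.swap j k) 1 (fun _ => norm_one) (stdVec 0 l n i) = stdVec 0 l n i := by
  unfold stdVec
  rw [map_sum]
  have hterm : ∀ t : Fin n, monoIso (Equiv.swap j k) 1 (fun _ => norm_one)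
      (EuclideanSpace.single t 1) = EuclideanSpace.single (Equiv.swap j k t) 1 := by
    intro t
    rw [monoIso_single]
    simp
  simp only [hterm]
  refine Finset.sum_nbij' (fun t => Equiv.swap j k t) (fun t => Equiv.swap j k t)
    ?_ ?_ ?_ ?_ ?_
  · intro t ht; exact swap_mem_block hsum hj hk ht
  · intro t ht; exact swap_mem_block hsum hj hk ht
  · intro t _; exact Equiv.swap_apply_self j k t
  · intro t _; exact Equiv.swap_apply_self j k t
  · intro t _; rfl

lemma swapIso_mem_stdParabolic (m p : ℕ) (hsum : l.sum = n) {r : Fin l.length} {j k : Fin n}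
    (hj : j ∈ stdBlock 0 l n r) (hk : k ∈ stdBlock 0 l n r) :
    monoIso (Equiv.swap j k) 1 (fun _ => norm_one) ∈ stdParabolic m p n 0 l := by
  constructor
  · refine ⟨Equiv.swap j k, 1, by simp, by simp, fun i => ?_⟩
    rw [monoIso_single]
    simp
  · intro x hx
    refine fixes_span (fun y hy => ?_) x hx
    obtain ⟨i, rfl⟩ := hy
    exact swapIso_fixes_stdVec hsum hj hk i

end swap



lemma smul_single {n : ℕ} (c : ℂ) (j : Fin n) (x : ℂ) :
    c • EuclideanSpace.single j x = EuclideanSpace.single j (c * x) := by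
  ext t
  by_cases h : t = j <;> simp [EuclideanSpace.single_apply, h]

lemma prod_zpow_sum {z : ℂ} (hz : z ≠ 0) {ι : Type*} (s : Finset ι) (f : ι → ℤ) :
    ∏ i ∈ s, z ^ f i = z ^ (∑ i ∈ s, f i) := by
  classical
  induction s using Finset.induction with
  | empty => simp
  | insert _ _ h ih => rw [Finset.prod_insert h, Finset.sum_insert h, zpow_add₀ hz, ih]

section diag
variable {n : ℕ} (hn : 0 < n) (γ : ℂ)
  (g : EuclideanSpace ℂ (Fin n) ≃ₗᵢ[ℂ] EuclideanSpace ℂ (Fin n))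

lemma diag_apply_single
    (h1 : g (EuclideanSpace.single ⟨0, hn⟩ 1) = γ • EuclideanSpace.single ⟨0, hn⟩ 1)
    (h2 : ∀ j : Fin n, j.val ≠ 0 → g (EuclideanSpace.single j 1) = EuclideanSpace.single j 1)
    (j : Fin n) (x : ℂ) :
    g (EuclideanSpace.single j x)
      = EuclideanSpace.single j ((if j = (⟨0, hn⟩ : Fin n) then γ else 1) * x) := by
  rw [euclid_single_eq_smul, map_smul]
  by_cases h : j = (⟨0, hn⟩ : Fin n)
  · subst h
    rw [h1, if_pos rfl, smul_smul, smul_single, mul_one, mul_comm]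
  · have : j.val ≠ 0 := fun hv => h (Fin.ext hv)
    rw [h2 j this, if_neg h, smul_single, one_mul, mul_one]

lemma diag_inv_apply_single (hγ : γ ≠ 0)
    (h1 : g (EuclideanSpace.single ⟨0, hn⟩ 1) = γ • EuclideanSpace.single ⟨0, hn⟩ 1)
    (h2 : ∀ j : Fin n, j.val ≠ 0 → g (EuclideanSpace.single j 1) = EuclideanSpace.single j 1)
    (j : Fin n) (x : ℂ) :
    g⁻¹ (EuclideanSpace.single j x)
      = EuclideanSpace.single j ((if j = (⟨0, hn⟩ : Fin n) then γ⁻¹ else 1) * x) := by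
  have key : g (EuclideanSpace.single j ((if j = (⟨0, hn⟩ : Fin n) then γ⁻¹ else 1) * x))
      = EuclideanSpace.single j x := by
    rw [diag_apply_single hn γ g h1 h2]
    by_cases h : j = (⟨0, hn⟩ : Fin n)
    · rw [if_pos h, if_pos h, ← mul_assoc, mul_inv_cancel₀ hγ, one_mul]
    · rw [if_neg h, if_neg h, one_mul, one_mul]
  calc g⁻¹ (EuclideanSpace.single j x)
      = g⁻¹ (g (EuclideanSpace.single j ((if j = (⟨0, hn⟩ : Fin n) then γ⁻¹ else 1) * x))) := by
        rw [key]
    _ = _ := g.symm_apply_apply _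

end diag


section diagconj
variable {n : ℕ} {l : List ℕ}

lemma monoIso_diag_inv (c : Fin n → ℂ) (hc : ∀ t, ‖c t‖ = 1) :
    (monoIso 1 c hc)⁻¹ = monoIso 1 (fun t => (c t)⁻¹)
      (fun t => by rw [norm_inv, hc, inv_one]) := by
  apply inv_eq_of_mul_eq_one_right
  apply LinearIsometryEquiv.ext
  intro v
  ext t
  exact mul_inv_cancel_left₀ (norm_one_ne_zero (hc t)) (v t)

lemma monoIso_diag_stdVec (hsum : l.sum = n) (c : Fin n → ℂ) (hc : ∀ t, ‖c t‖ = 1)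
    (hconst : ∀ (i : Fin l.length) (t t' : Fin n),
      t ∈ stdBlock 0 l n i → t' ∈ stdBlock 0 l n i → c t = c t') (i : Fin l.length) :
    ∃ a : ℂ, monoIso 1 c hc (stdVec 0 l n i) = a • stdVec 0 l n i := by
  rcases (stdBlock 0 l n i).eq_empty_or_nonempty with hemp | ⟨t₀, ht₀⟩
  · exact ⟨1, by simp [stdVec, hemp]⟩
  · refine ⟨c t₀, ?_⟩
    unfold stdVec
    rw [map_sum, Finset.smul_sum]
    refine Finset.sum_congr rfl fun t ht => ?_
    rw [monoIso_single]
    have h1 : (1 : Equiv.Perm (Fin n)) t = t := rfl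
    rw [h1, mul_one, hconst i t t₀ ht ht₀, smul_single, mul_one]

lemma monoIso_diag_conj_mem {m p : ℕ} (hsum : l.sum = n)
    (c : Fin n → ℂ) (hc : ∀ t, ‖c t‖ = 1) (hcm : ∀ t, c t ^ m = 1)
    (hconst : ∀ (i : Fin l.length) (t t' : Fin n),
      t ∈ stdBlock 0 l n i → t' ∈ stdBlock 0 l n i → c t = c t') :
    ∀ g ∈ stdParabolic m p n 0 l,
      (monoIso 1 c hc) * g * (monoIso 1 c hc)⁻¹ ∈ stdParabolic m p n 0 l := by
  intro g hg
  obtain ⟨⟨σg, θg, hθm, hθp, hact⟩, hfix⟩ := hg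
  have hcne : ∀ t, c t ≠ 0 := fun t => norm_one_ne_zero (hc t)
  constructor
  · refine ⟨σg, fun t => (Units.mk0 (c (σg t)) (hcne _)) * θg t * (Units.mk0 (c t) (hcne _))⁻¹,
      fun t => ?_, ?_, fun t => ?_⟩
    · simp only [Units.val_mul, Units.val_inv_eq_inv_val, Units.val_mk0]
      rw [mul_pow, mul_pow, inv_pow, hcm, hcm, hθm, mul_one, one_mul, inv_one]
    · have hre : (∏ t, (((Units.mk0 (c (σg t)) (hcne _)) * θg t
          * (Units.mk0 (c t) (hcne _))⁻¹ : ℂˣ) : ℂ))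
          = (∏ t, c (σg t)) * (∏ t, (θg t : ℂ)) * (∏ t, (c t)⁻¹) := by
        simp only [Units.val_mul, Units.val_inv_eq_inv_val, Units.val_mk0]
        rw [Finset.prod_mul_distrib, Finset.prod_mul_distrib]
      rw [hre, Equiv.prod_comp σg c, Finset.prod_inv_distrib, mul_right_comm,
        mul_inv_cancel₀ (Finset.prod_ne_zero_iff.mpr fun t _ => hcne t), one_mul]
      exact hθp
    · have step0 : (monoIso 1 c hc)⁻¹ (EuclideanSpace.single t 1)
          = EuclideanSpace.single t (c t)⁻¹ := by
        rw [monoIso_diag_inv, monoIso_single]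
        have h1 : (1 : Equiv.Perm (Fin n)) t = t := rfl
        rw [h1, mul_one]
      have : ((monoIso 1 c hc) * g * (monoIso 1 c hc)⁻¹) (EuclideanSpace.single t 1)
          = (monoIso 1 c hc) (g ((monoIso 1 c hc)⁻¹ (EuclideanSpace.single t 1))) := rfl
      rw [this, step0, euclid_single_eq_smul, map_smul, hact t, map_smul, monoIso_single]
      have h1 : (1 : Equiv.Perm (Fin n)) (σg t) = σg t := rfl
      rw [h1, smul_single]
      simp only [Units.val_mul, Units.val_inv_eq_inv_val, Units.val_mk0]
      ring_nf
  · intro u hu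
    have hinvmem : (monoIso 1 c hc)⁻¹ u ∈ Submodule.span ℂ
        (Set.range fun i : Fin l.length => stdVec 0 l n i) := by
      rw [monoIso_diag_inv]
      refine maps_span (fun y hy => ?_) u hu
      obtain ⟨i, rfl⟩ := hy
      obtain ⟨a, ha⟩ := monoIso_diag_stdVec hsum (fun t => (c t)⁻¹)
        (fun t => by rw [norm_inv, hc, inv_one])
        (fun i t t' ht ht' => by
          show (c t)⁻¹ = (c t')⁻¹
          rw [hconst i t t' ht ht']) i
      rw [ha]
      exact Submodule.smul_mem _ _ (Submodule.subset_span ⟨i, rfl⟩)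
    have : ((monoIso 1 c hc) * g * (monoIso 1 c hc)⁻¹) u
        = (monoIso 1 c hc) (g ((monoIso 1 c hc)⁻¹ u)) := rfl
    rw [this, hfix _ hinvmem]
    exact (monoIso 1 c hc).apply_symm_apply u

end diagconj

set_option maxHeartbeats 2000000 in
/-- `P_{(0,λ)}^α` and `P_{(0,λ)}^β` are conjugate in `G(m,p,n)` if and only if
`αβ⁻¹` is an `(m/e)`-th root of unity, where `e = gcd(p, n₁, …, n_d)`. -/
theorem conj_stdParabolic_iff (m p n : ℕ) (hm : 0 < m) (hp : p ∣ m) (hn : 0 < n)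
    (l : List ℕ) (hsort : l.Pairwise (· ≥ ·)) (hpos : ∀ x ∈ l, 0 < x) (hsum : l.sum = n)
    (α β : ℂ) (hα : α ^ m = 1) (hβ : β ^ m = 1)
    (gα gβ : EuclideanSpace ℂ (Fin n) ≃ₗᵢ[ℂ] EuclideanSpace ℂ (Fin n))
    (hgα : gα ∈ Gmpn m 1 n) (hgβ : gβ ∈ Gmpn m 1 n)
    (hgα1 : gα (EuclideanSpace.single ⟨0, hn⟩ 1) = α • EuclideanSpace.single ⟨0, hn⟩ 1)
    (hgα2 : ∀ j : Fin n, j.val ≠ 0 →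
      gα (EuclideanSpace.single j 1) = EuclideanSpace.single j 1)
    (hgβ1 : gβ (EuclideanSpace.single ⟨0, hn⟩ 1) = β • EuclideanSpace.single ⟨0, hn⟩ 1)
    (hgβ2 : ∀ j : Fin n, j.val ≠ 0 →
      gβ (EuclideanSpace.single j 1) = EuclideanSpace.single j 1) :
    (∃ x ∈ Gmpn m p n,
        Subgroup.map (MulAut.conj x).toMonoidHom
          (Subgroup.map (MulAut.conj gα).toMonoidHom (stdParabolic m p n 0 l)) =
        Subgroup.map (MulAut.conj gβ).toMonoidHom (stdParabolic m p n 0 l)) ↔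
      (α * β⁻¹) ^ (m / Nat.gcd p (l.foldr Nat.gcd 0)) = 1 := by
  classical
  have hp0 : 0 < p := by
    rcases Nat.eq_zero_or_pos p with rfl | h
    · rw [zero_dvd_iff] at hp; omega
    · exact h
  set e' : ℕ := l.foldr Nat.gcd 0 with he'def
  set e : ℕ := Nat.gcd p e' with hedef
  have he0 : 0 < e := Nat.gcd_pos_of_pos_left _ hp0
  have hedp : e ∣ p := Nat.gcd_dvd_left _ _
  have hede' : e ∣ e' := Nat.gcd_dvd_right _ _
  have hedm : e ∣ m := hedp.trans hp
  have hα0 : α ≠ 0 := fun h => by rw [h, zero_pow hm.ne'] at hα; exact zero_ne_one hα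
  have hβ0 : β ≠ 0 := fun h => by rw [h, zero_pow hm.ne'] at hβ; exact zero_ne_one hβ
  have hme : m / e = (m / p) * (p / e) := by
    obtain ⟨u, hu⟩ := hp
    obtain ⟨v, hv⟩ := hedp
    have hev : 0 < e * v := by rw [← hv]; exact hp0
    rw [hu, hv, Nat.mul_div_cancel_left u hev, Nat.mul_div_cancel_left v he0,
      Nat.mul_assoc, Nat.mul_div_cancel_left (v * u) he0]
    exact Nat.mul_comm v u
  have hvspan : ∀ i : Fin l.length, stdVec 0 l n i ∈ Submodule.span ℂ
      (Set.range fun i : Fin l.length => stdVec 0 l n i) :=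
    fun i => Submodule.subset_span ⟨i, rfl⟩
  have hgetdvd : ∀ i : Fin l.length, e ∣ l.get i := fun i =>
    hede'.trans (foldr_gcd_dvd l _ (l.get_mem i))
  constructor
  · rintro ⟨x, hxG, hP⟩
    obtain ⟨σx, θx, hθxm, hθxp, hact⟩ := hxG
    set z := gβ⁻¹ * x * gα with hzdef
    set θ' : Fin n → ℂ := fun t =>
      (if σx t = (⟨0, hn⟩ : Fin n) then β⁻¹ else 1) *
        ((if t = (⟨0, hn⟩ : Fin n) then α else 1) * (θx t : ℂ)) with hθ'def
    have hz : ∀ t, z (EuclideanSpace.single t 1)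
        = EuclideanSpace.single (σx t) (θ' t) := by
      intro t
      have hstep : z (EuclideanSpace.single t 1)
          = gβ⁻¹ (x (gα (EuclideanSpace.single t 1))) := rfl
      rw [hstep, diag_apply_single hn α gα hgα1 hgα2 t 1,
        euclid_single_eq_smul, map_smul, hact t, map_smul,
        diag_inv_apply_single hn β gβ hβ0 hgβ1 hgβ2, smul_single]
      congr 1
      rw [hθ'def]
      ring
    have hθ'ne : ∀ t, θ' t ≠ 0 := by
      intro t
      simp only [hθ'def]
      apply mul_ne_zero
      · split_ifs
        · exact inv_ne_zero hβ0
        · exact one_ne_zero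
      apply mul_ne_zero
      · split_ifs
        · exact hα0
        · exact one_ne_zero
      · exact (θx t).ne_zero
    have hθ'm : ∀ t, θ' t ^ m = 1 := by
      intro t
      simp only [hθ'def]
      rw [mul_pow, mul_pow]
      have e1 : (if σx t = (⟨0, hn⟩ : Fin n) then β⁻¹ else 1) ^ m = 1 := by
        split_ifs
        · rw [inv_pow, hβ, inv_one]
        · exact one_pow m
      have e2 : (if t = (⟨0, hn⟩ : Fin n) then α else 1) ^ m = 1 := by
        split_ifs
        · exact hα
        · exact one_pow m
      rw [e1, e2, hθxm t, one_mul, one_mul]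
    have hfixp : ∀ h ∈ stdParabolic m p n 0 l, ∀ i : Fin l.length,
        h (stdVec 0 l n i) = stdVec 0 l n i := fun h hh i => hh.2 _ (hvspan i)
    have hconst : ∀ (r : Fin l.length) (j k : Fin n), j ∈ stdBlock 0 l n r →
        k ∈ stdBlock 0 l n r → ∀ i : Fin l.length,
          z (stdVec 0 l n i) j = z (stdVec 0 l n i) k := by
      intro r j k hj hk i
      set sw := monoIso (Equiv.swap j k) 1 (fun _ => norm_one) with hswdef
      have hsP : sw ∈ stdParabolic m p n 0 l := swapIso_mem_stdParabolic m p hsum hj hk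
      have hmem : (MulAut.conj gβ).toMonoidHom sw
          ∈ Subgroup.map (MulAut.conj gβ).toMonoidHom (stdParabolic m p n 0 l) :=
        Subgroup.mem_map_of_mem _ hsP
      rw [← hP] at hmem
      obtain ⟨u, hu, hux⟩ := hmem
      obtain ⟨h, hh, hhu⟩ := hu
      have heq : x * (gα * h * gα⁻¹) * x⁻¹ = gβ * sw * gβ⁻¹ := by
        have h4 : (MulAut.conj x).toMonoidHom ((MulAut.conj gα).toMonoidHom h)
            = x * (gα * h * gα⁻¹) * x⁻¹ := rfl
        rw [← h4, hhu, hux]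
        rfl
      have hsz : sw * z = z * h := by
        have hs2 : sw = gβ⁻¹ * (x * (gα * h * gα⁻¹) * x⁻¹) * gβ := by
          rw [heq]; group
        rw [hs2, hzdef]
        group
      have hv : sw (z (stdVec 0 l n i)) = z (stdVec 0 l n i) := by
        have e1 : sw (z (stdVec 0 l n i)) = (sw * z) (stdVec 0 l n i) := rfl
        rw [e1, hsz]
        have e2 : (z * h) (stdVec 0 l n i) = z (h (stdVec 0 l n i)) := rfl
        rw [e2, hfixp h hh i]
      have e3 : sw (z (stdVec 0 l n i)) j = z (stdVec 0 l n i) k := by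
        rw [hswdef, monoIso_apply]
        have hsym : (Equiv.swap j k).symm j = k := by
          rw [Equiv.symm_swap, Equiv.swap_apply_left]
        rw [hsym]
        simp
      rw [← e3, hv]
    have hcoord : ∀ (i : Fin l.length) (w : Fin n), z (stdVec 0 l n i) w
        = if σx.symm w ∈ stdBlock 0 l n i then θ' (σx.symm w) else 0 := by
      intro i w
      have h1 : z (stdVec 0 l n i)
          = ∑ t ∈ stdBlock 0 l n i, EuclideanSpace.single (σx t) (θ' t) := by
        unfold stdVec
        rw [map_sum]
        exact Finset.sum_congr rfl fun t _ => hz t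
      rw [h1, WithLp.ofLp_sum, Finset.sum_apply]
      have h2 : ∀ t, (EuclideanSpace.single (σx t) (θ' t) : EuclideanSpace ℂ (Fin n)) w
          = if t = σx.symm w then θ' t else 0 := by
        intro t
        rw [EuclideanSpace.single_apply]
        congr 1
        apply propext
        constructor
        · intro hh; rw [hh, Equiv.symm_apply_apply]
        · intro hh; rw [hh, Equiv.apply_symm_apply]
      simp only [h2]
      exact Finset.sum_ite_eq' _ _ _
    have hblockpow : ∀ i : Fin l.length,
        (∏ t ∈ stdBlock 0 l n i, θ' t) ^ (m / e) = 1 := by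
      intro i
      set A := (stdBlock 0 l n i).image σx with hAdef
      have hmemA : ∀ w, w ∈ A ↔ σx.symm w ∈ stdBlock 0 l n i := by
        intro w
        rw [hAdef, Finset.mem_image]
        constructor
        · rintro ⟨t, ht, rfl⟩; rwa [Equiv.symm_apply_apply]
        · intro hh; exact ⟨σx.symm w, hh, Equiv.apply_symm_apply _ _⟩
      have step1 : ∏ t ∈ stdBlock 0 l n i, θ' t = ∏ w ∈ A, z (stdVec 0 l n i) w := by
        rw [hAdef, Finset.prod_image (fun a _ b _ h => σx.injective h)]
        refine Finset.prod_congr rfl fun t ht => ?_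
        rw [hcoord i (σx t), Equiv.symm_apply_apply, if_pos ht]
      have step2 : A = Finset.univ.biUnion
          (fun r : Fin l.length => A ∩ stdBlock 0 l n r) := by
        ext w
        simp only [Finset.mem_biUnion, Finset.mem_inter]
        constructor
        · intro hw
          exact ⟨blockIdx l n hsum w, Finset.mem_univ _, hw, mem_blockIdx l n hsum w⟩
        · rintro ⟨r, _, hw, _⟩; exact hw
      have hdisj : Set.PairwiseDisjoint (↑(Finset.univ : Finset (Fin l.length)))
          (fun r : Fin l.length => A ∩ stdBlock 0 l n r) := by
        intro r₁ _ r₂ _ hne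
        exact Finset.disjoint_left.mpr fun w hw1 hw2 =>
          Finset.disjoint_left.mp
            (stdBlock_disjoint l n (fun hh => hne (Fin.ext hh)))
            (Finset.mem_inter.mp hw1).2 (Finset.mem_inter.mp hw2).2
      have step4 : ∀ r : Fin l.length,
          (∏ w ∈ A ∩ stdBlock 0 l n r, z (stdVec 0 l n i) w) ^ (m / e) = 1 := by
        intro r
        rcases (A ∩ stdBlock 0 l n r).eq_empty_or_nonempty with hemp | ⟨t₀, ht₀⟩
        · rw [hemp, Finset.prod_empty, one_pow]
        · obtain ⟨ht₀A, ht₀B⟩ := Finset.mem_inter.mp ht₀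
          have hu0 : z (stdVec 0 l n i) t₀ ≠ 0 := by
            rw [hcoord, if_pos ((hmemA t₀).mp ht₀A)]
            exact hθ'ne _
          have hum : z (stdVec 0 l n i) t₀ ^ m = 1 := by
            rw [hcoord, if_pos ((hmemA t₀).mp ht₀A)]
            exact hθ'm _
          have hconst' : ∀ w ∈ stdBlock 0 l n r,
              z (stdVec 0 l n i) w = z (stdVec 0 l n i) t₀ :=
            fun w hw => hconst r w t₀ hw ht₀B i
          have hsub : stdBlock 0 l n r ⊆ A := by
            intro w hw
            by_contra hwA
            have : z (stdVec 0 l n i) w = 0 := by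
              rw [hcoord, if_neg (fun hh => hwA ((hmemA w).mpr hh))]
            rw [hconst' w hw] at this
            exact hu0 this
          have hAB : A ∩ stdBlock 0 l n r = stdBlock 0 l n r :=
            Finset.inter_eq_right.mpr hsub
          rw [hAB]
          have : ∏ w ∈ stdBlock 0 l n r, z (stdVec 0 l n i) w
              = z (stdVec 0 l n i) t₀ ^ (l.get r) := by
            rw [Finset.prod_congr rfl hconst', Finset.prod_const, card_stdBlock l n hsum r]
          rw [this, ← pow_mul]
          obtain ⟨a, ha⟩ := hgetdvd r
          obtain ⟨bm, hbm⟩ := hedm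
          have harith : l.get r * (m / e) = m * a := by
            rw [ha, hbm, Nat.mul_div_cancel_left _ he0]
            ring
          rw [harith, pow_mul, hum, one_pow]
      calc (∏ t ∈ stdBlock 0 l n i, θ' t) ^ (m / e)
          = (∏ w ∈ A, z (stdVec 0 l n i) w) ^ (m / e) := by rw [step1]
        _ = (∏ r : Fin l.length, ∏ w ∈ A ∩ stdBlock 0 l n r,
              z (stdVec 0 l n i) w) ^ (m / e) := by
            conv_lhs => rw [step2]
            rw [Finset.prod_biUnion hdisj]
        _ = ∏ r : Fin l.length, (∏ w ∈ A ∩ stdBlock 0 l n r,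
              z (stdVec 0 l n i) w) ^ (m / e) := by rw [← Finset.prod_pow]
        _ = 1 := by
            rw [Finset.prod_congr rfl fun r _ => step4 r, Finset.prod_const_one]
    have htot : (∏ t, θ' t) ^ (m / e) = 1 := by
      have hsplit : ∏ t, θ' t = ∏ i : Fin l.length, ∏ t ∈ stdBlock 0 l n i, θ' t := by
        rw [← Finset.prod_biUnion (fun r₁ _ r₂ _ hne =>
          stdBlock_disjoint l n (fun hh => hne (Fin.ext hh))),
          ← univ_eq_biUnion_blocks l n hsum]
      rw [hsplit, ← Finset.prod_pow,
        Finset.prod_congr rfl fun i _ => hblockpow i, Finset.prod_const_one]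
    have hprodθ' : ∏ t, θ' t = β⁻¹ * (α * ∏ t, (θx t : ℂ)) := by
      rw [hθ'def]
      rw [Finset.prod_mul_distrib, Finset.prod_mul_distrib]
      congr 1
      · rw [Equiv.prod_comp σx (fun k => if k = (⟨0, hn⟩ : Fin n) then β⁻¹ else 1),
          Finset.prod_ite_eq', if_pos (Finset.mem_univ _)]
      · congr 1
        rw [Finset.prod_ite_eq', if_pos (Finset.mem_univ _)]
    have hθxtot : (∏ t, (θx t : ℂ)) ^ (m / e) = 1 := by
      rw [hme, pow_mul, hθxp, one_pow]
    have hθxne : (∏ t, (θx t : ℂ)) ≠ 0 :=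
      Finset.prod_ne_zero_iff.mpr fun t _ => (θx t).ne_zero
    have hfin : ((α * β⁻¹) * ∏ t, (θx t : ℂ)) ^ (m / e) = 1 := by
      have : (α * β⁻¹) * ∏ t, (θx t : ℂ) = ∏ t, θ' t := by
        rw [hprodθ']; ring
      rw [this]; exact htot
    rw [mul_pow, hθxtot, mul_one] at hfin
    exact hfin

  · intro hw
    set ζ : ℂ := Complex.exp (2 * Real.pi * Complex.I / m) with hζdef
    have hζprim : IsPrimitiveRoot ζ m := Complex.isPrimitiveRoot_exp m hm.ne'
    have hζm : ζ ^ m = 1 := hζprim.pow_eq_one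
    have hζ0 : ζ ≠ 0 := fun h => by
      rw [h, zero_pow hm.ne'] at hζm; exact zero_ne_one hζm
    have hζnorm : ‖ζ‖ = 1 := by
      rw [hζdef]
      have hre : (2 * Real.pi * Complex.I / m) = ((2 * Real.pi / m : ℝ) : ℂ) * Complex.I := by
        push_cast; ring
      rw [hre, Complex.norm_exp_ofReal_mul_I]
    have hmee : m = e * (m / e) := (Nat.mul_div_cancel' hedm).symm
    have hprm : IsPrimitiveRoot (ζ ^ e) (m / e) := hζprim.pow hm hmee
    have hmepos : 0 < m / e := Nat.div_pos (Nat.le_of_dvd hm hedm) he0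
    haveI : NeZero (m / e) := ⟨hmepos.ne'⟩
    obtain ⟨j, hjlt, hjw⟩ := hprm.eq_pow_of_pow_eq_one hw
    obtain ⟨b, hbez⟩ := exists_bezout_list l
    set A : ℤ := Nat.gcdA p e' with hAdef
    set Bco : ℤ := Nat.gcdB p e' with hBdef
    have hABz : (e : ℤ) = p * A + e' * Bco := Nat.gcd_eq_gcd_ab p e'
    set cc : Fin l.length → ℂ := fun i => ζ ^ ((j : ℤ) * Bco * b i) with hccdef
    set c : Fin n → ℂ := fun t => cc (blockIdx l n hsum t) with hcdef
    have hccnorm : ∀ i, ‖cc i‖ = 1 := by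
      intro i
      simp only [hccdef]
      rw [norm_zpow, hζnorm, one_zpow]
    have hcnorm : ∀ t, ‖c t‖ = 1 := fun t => hccnorm _
    have hccm : ∀ i : Fin l.length, cc i ^ m = 1 := by
      intro i
      simp only [hccdef]
      rw [← zpow_natCast (ζ ^ ((j : ℤ) * Bco * b i)) m, ← zpow_mul, mul_comm, zpow_mul,
        zpow_natCast, hζm, one_zpow]
    have hcm : ∀ t, c t ^ m = 1 := fun t => hccm _
    have hconstc : ∀ (i : Fin l.length) (t t' : Fin n), t ∈ stdBlock 0 l n i →
        t' ∈ stdBlock 0 l n i → c t = c t' := by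
      intro i t t' ht ht'
      simp only [hcdef]
      rw [blockIdx_eq l n hsum ht, blockIdx_eq l n hsum ht']
    set y := monoIso 1 c hcnorm with hydef
    have hcne : ∀ t, c t ≠ 0 := fun t => norm_one_ne_zero (hcnorm t)
    refine ⟨gβ * y * gα⁻¹, ?_, ?_⟩
    · -- membership in Gmpn m p n
      have hθfne : ∀ t : Fin n,
          (if t = (⟨0, hn⟩ : Fin n) then β * α⁻¹ else 1) * c t ≠ 0 := by
        intro t
        apply mul_ne_zero _ (hcne t)
        split_ifs
        · exact mul_ne_zero hβ0 (inv_ne_zero hα0)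
        · exact one_ne_zero
      refine ⟨1, fun t => Units.mk0 _ (hθfne t), fun t => ?_, ?_, fun t => ?_⟩
      · rw [Units.val_mk0, mul_pow]
        have e1 : (if t = (⟨0, hn⟩ : Fin n) then β * α⁻¹ else 1) ^ m = 1 := by
          split_ifs
          · rw [mul_pow, inv_pow, hβ, hα, inv_one, mul_one]
          · exact one_pow m
        rw [e1, hcm t, one_mul]
      · -- product condition
        have hprodsplit : (∏ t, ((Units.mk0 _ (hθfne t) : ℂˣ) : ℂ))
            = (β * α⁻¹) * ∏ t, c t := by
          simp only [Units.val_mk0]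
          rw [Finset.prod_mul_distrib]
          congr 1
          rw [Finset.prod_ite_eq', if_pos (Finset.mem_univ _)]
        have hprodc : ∏ t, c t = ζ ^ ((j : ℤ) * Bco * (e' : ℤ)) := by
          have h1 : ∏ t, c t = ∏ i : Fin l.length, ∏ t ∈ stdBlock 0 l n i, c t := by
            rw [← Finset.prod_biUnion (fun r₁ _ r₂ _ hne =>
              stdBlock_disjoint l n (fun hh => hne (Fin.ext hh))),
              ← univ_eq_biUnion_blocks l n hsum]
          have h2 : ∀ i : Fin l.length, ∏ t ∈ stdBlock 0 l n i, c t
              = ζ ^ ((j : ℤ) * Bco * b i * (l.get i : ℤ)) := by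
            intro i
            have h3 : ∀ t ∈ stdBlock 0 l n i, c t = cc i := by
              intro t ht
              simp only [hcdef]
              rw [blockIdx_eq l n hsum ht]
            rw [Finset.prod_congr rfl h3, Finset.prod_const, card_stdBlock l n hsum i]
            simp only [hccdef]
            rw [← zpow_natCast (ζ ^ ((j : ℤ) * Bco * b i)) (l.get i), ← zpow_mul]
          rw [h1, Finset.prod_congr rfl fun i _ => h2 i, prod_zpow_sum hζ0]
          congr 1
          have h4 : ∑ i : Fin l.length, (j : ℤ) * Bco * b i * (l.get i : ℤ)
              = (j : ℤ) * Bco * ∑ i : Fin l.length, b i * (l.get i : ℤ) := by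
            rw [Finset.mul_sum]
            exact Finset.sum_congr rfl fun i _ => by ring
          rw [h4, ← hbez]
        have hba : β * α⁻¹ = ζ ^ (-((e : ℤ) * (j : ℤ))) := by
          have h5 : α * β⁻¹ = ζ ^ ((e : ℤ) * (j : ℤ)) := by
            rw [← hjw, ← pow_mul, ← zpow_natCast]
            norm_cast
          have h6 : β * α⁻¹ = (α * β⁻¹)⁻¹ := by
            rw [mul_inv, inv_inv, mul_comm]
          rw [h6, h5, ← zpow_neg]
        rw [hprodsplit, hprodc, hba, ← zpow_add₀ hζ0]
        have h7 : -((e : ℤ) * (j : ℤ)) + (j : ℤ) * Bco * (e' : ℤ)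
            = -((j : ℤ) * A) * (p : ℤ) := by
          rw [hABz]
          ring
        rw [h7]
        have h8 : (ζ ^ (-((j : ℤ) * A) * (p : ℤ))) ^ (m / p)
            = ζ ^ (-((j : ℤ) * A) * (m : ℤ)) := by
          rw [← zpow_natCast (ζ ^ (-((j : ℤ) * A) * (p : ℤ))) (m / p), ← zpow_mul]
          congr 1
          have h9 : (p : ℤ) * ((m / p : ℕ) : ℤ) = (m : ℤ) := by
            rw [← Nat.cast_mul, Nat.mul_div_cancel' hp]
          rw [mul_assoc, h9]
        rw [h8, mul_comm (-((j : ℤ) * A)) ((m : ℤ)), zpow_mul, zpow_natCast, hζm, one_zpow]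
      · -- action on basis vectors
        have hstep : (gβ * y * gα⁻¹) (EuclideanSpace.single t 1)
            = gβ (y (gα⁻¹ (EuclideanSpace.single t 1))) := rfl
        rw [hstep, diag_inv_apply_single hn α gα hα0 hgα1 hgα2 t 1, monoIso_single,
          diag_apply_single hn β gβ hgβ1 hgβ2]
        have h1 : (1 : Equiv.Perm (Fin n)) t = t := rfl
        rw [h1, Units.val_mk0]
        have h2 : ((1 : Equiv.Perm (Fin n)) : Equiv.Perm (Fin n)) t = t := rfl
        congr 1
        by_cases ht : t = (⟨0, hn⟩ : Fin n) <;> simp [ht] <;> ring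
    · -- the conjugation equality
      have hconj1 := monoIso_diag_conj_mem (m := m) (p := p) hsum c hcnorm hcm hconstc
      have hyinv : y⁻¹ = monoIso 1 (fun t => (c t)⁻¹)
          (fun t => by rw [norm_inv, hcnorm, inv_one]) := monoIso_diag_inv c hcnorm
      have hconj2 : ∀ g ∈ stdParabolic m p n 0 l,
          y⁻¹ * g * y ∈ stdParabolic m p n 0 l := by
        intro g hg
        have h10 := monoIso_diag_conj_mem (m := m) (p := p) hsum (fun t => (c t)⁻¹)
          (fun t => by rw [norm_inv, hcnorm, inv_one])
          (fun t => by
            show (c t)⁻¹ ^ m = 1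
            rw [inv_pow, hcm, inv_one])
          (fun i t t' ht ht' => by
            show (c t)⁻¹ = (c t')⁻¹
            rw [hconstc i t t' ht ht']) g hg
        rw [← hyinv, inv_inv] at h10
        exact h10
      ext g
      simp only [Subgroup.mem_map]
      constructor
      · rintro ⟨u, ⟨h, hh, rfl⟩, rfl⟩
        refine ⟨y * h * y⁻¹, hconj1 h hh, ?_⟩
        have h1 : (MulAut.conj gβ).toMonoidHom (y * h * y⁻¹)
            = gβ * (y * h * y⁻¹) * gβ⁻¹ := rfl
        have h2 : (MulAut.conj (gβ * y * gα⁻¹)).toMonoidHom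
              ((MulAut.conj gα).toMonoidHom h)
            = (gβ * y * gα⁻¹) * (gα * h * gα⁻¹) * (gβ * y * gα⁻¹)⁻¹ := rfl
        rw [h1, h2]
        group
      · rintro ⟨h', hh', rfl⟩
        refine ⟨(MulAut.conj gα).toMonoidHom (y⁻¹ * h' * y),
          ⟨y⁻¹ * h' * y, hconj2 h' hh', rfl⟩, ?_⟩
        have h1 : (MulAut.conj gβ).toMonoidHom h' = gβ * h' * gβ⁻¹ := rfl
        have h2 : (MulAut.conj (gβ * y * gα⁻¹)).toMonoidHom
              ((MulAut.conj gα).toMonoidHom (y⁻¹ * h' * y))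
            = (gβ * y * gα⁻¹) * (gα * (y⁻¹ * h' * y) * gα⁻¹) * (gβ * y * gα⁻¹)⁻¹ := rfl
        rw [h1, h2]
        group
end
end

section
/- Let W be a finite Coxeter group with root system Φ, positive system Φ^+ and simple system Δ, realised inside an A-root system of a unitary reflection group G with unit roots μ = ⟨−1⟩ × ⟨γ⟩ where γ has odd order h. Set Φ̃^+ = ∪_{i=0}^{h−1} γ^i Φ^+ and Φ̃^− = −Φ̃^+. For g in the normaliser of W in G define N(g) = {a ∈ Φ^+ : g(a) ∈ Φ̃^−}. Then for a ∈ Δ: if g(a) ∈ Φ̃^−, then r_a N(g r_a) = N(g) \ {a}; and if g(a) ∈ Φ̃^+, then N(g r_a) = r_a N(g) ∪ {a} (disjoint union). -/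
open Module Submodule

variable {V : Type*} [NormedAddCommGroup V] [InnerProductSpace ℂ V] [FiniteDimensional ℂ V]

open Pointwise

/-- Lemma `lemma:length`: the exchange property for the length function
`N(g) = {a ∈ Φ⁺ : g(a) ∈ Φ̃⁻}` relative to the extended positive system
`Φ̃⁺ = ∪_{i<h} γ^i Φ⁺`. -/
theorem length_exchange
    (Φp Δ : Set V) (hΔ : Δ ⊆ Φp) (hpos : ∀ a ∈ Φp, -a ∉ Φp)
    (r : V → (V ≃ₗᵢ[ℂ] V))
    (hneg : ∀ a ∈ Δ, r a a = -a)
    (hinv : ∀ a ∈ Δ, r a * r a = 1)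
    (hsimple : ∀ a ∈ Δ, (r a) '' (Φp \ {a}) = Φp \ {a})
    (γ : ℂ) (h : ℕ) (hodd : Odd h) (hord : orderOf γ = h)
    (hdisj : Disjoint (⋃ i ∈ Finset.range h, γ ^ i • Φp)
      (-(⋃ i ∈ Finset.range h, γ ^ i • Φp)))
    (g : V ≃ₗᵢ[ℂ] V)
    (hg : ∀ b ∈ Φp, g b ∈ (⋃ i ∈ Finset.range h, γ ^ i • Φp) ∪
      (-(⋃ i ∈ Finset.range h, γ ^ i • Φp)))
    (a : V) (haΔ : a ∈ Δ) :
    (g a ∈ -(⋃ i ∈ Finset.range h, γ ^ i • Φp) →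
      (r a) '' {b | b ∈ Φp ∧ (g * r a) b ∈ -(⋃ i ∈ Finset.range h, γ ^ i • Φp)} =
        {b | b ∈ Φp ∧ g b ∈ -(⋃ i ∈ Finset.range h, γ ^ i • Φp)} \ {a}) ∧
    (g a ∈ (⋃ i ∈ Finset.range h, γ ^ i • Φp) →
      {b | b ∈ Φp ∧ (g * r a) b ∈ -(⋃ i ∈ Finset.range h, γ ^ i • Φp)} =
        (r a) '' {b | b ∈ Φp ∧ g b ∈ -(⋃ i ∈ Finset.range h, γ ^ i • Φp)} ∪ {a} ∧
      a ∉ (r a) '' {b | b ∈ Φp ∧ g b ∈ -(⋃ i ∈ Finset.range h, γ ^ i • Φp)}) := by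
  set S := (⋃ i ∈ Finset.range h, γ ^ i • Φp) with hS
  have hrr : ∀ v, r a (r a v) = v := fun v => by
    have h1 := DFunLike.congr_fun (hinv a haΔ) v
    simpa using h1
  have hra := hneg a haΔ
  have hperm : ∀ b, b ∈ Φp → b ≠ a → r a b ∈ Φp ∧ r a b ≠ a := by
    intro b hb hne
    have hmem : r a b ∈ Φp \ {a} := by
      rw [← hsimple a haΔ]
      exact Set.mem_image_of_mem _ ⟨hb, hne⟩
    exact ⟨hmem.1, hmem.2⟩
  have hdisj' : ∀ x, x ∈ S → x ∉ -S := fun x hx => Set.disjoint_left.mp hdisj hx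
  have hmul : ∀ b, (g * r a) b = g (r a b) := fun b => rfl
  have hnegS : ∀ x : V, -x ∈ -S ↔ x ∈ S := by
    intro x
    rw [Set.mem_neg, neg_neg]
  constructor
  · intro hga
    ext x
    constructor
    · rintro ⟨b, ⟨hb, hgb⟩, rfl⟩
      rw [hmul] at hgb
      have hbne : b ≠ a := by
        rintro rfl
        rw [hra, map_neg] at hgb
        exact hdisj' (g b) ((hnegS _).mp hgb) hga
      obtain ⟨h1, h2⟩ := hperm b hb hbne
      exact ⟨⟨h1, hgb⟩, h2⟩
    · rintro ⟨⟨hx, hgx⟩, hxa⟩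
      refine ⟨r a x, ⟨(hperm x hx hxa).1, ?_⟩, hrr x⟩
      rw [hmul, hrr]
      exact hgx
  · intro hga
    have hnotim : a ∉ (r a) '' {b | b ∈ Φp ∧ g b ∈ -S} := by
      rintro ⟨c, ⟨hc, hgc⟩, hca⟩
      have hcne : c ≠ a := by
        rintro rfl
        exact hdisj' (g c) hga hgc
      have := (hperm c hc hcne).2
      exact this hca
    refine ⟨?_, hnotim⟩
    ext b
    constructor
    · rintro ⟨hb, hgb⟩
      rw [hmul] at hgb
      by_cases hbne : b = a
      · exact Or.inr hbne
      · obtain ⟨h1, _⟩ := hperm b hb hbne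
        exact Or.inl ⟨r a b, ⟨h1, hgb⟩, hrr b⟩
    · rintro (⟨c, ⟨hc, hgc⟩, rfl⟩ | hb)
      · have hcne : c ≠ a := by
          rintro rfl
          exact hdisj' (g c) hga hgc
        refine ⟨(hperm c hc hcne).1, ?_⟩
        rw [hmul, hrr]
        exact hgc
      · simp only [Set.mem_singleton_iff] at hb
        subst hb
        refine ⟨hΔ haΔ, ?_⟩
        rw [hmul, hra, map_neg]
        exact (hnegS _).mpr hga
end

section
/- Let P = ⟨r⟩ be a rank 1 parabolic subgroup of a finite unitary reflection group G, with r a reflection of order k and root a. Let μ = {ξ ∈ C : g(a) = ξa for some g ∈ N_G(P)}, a cyclic group of order m divisible by k, and let B = {ξ^k a : ξ ∈ μ}. If m/k and k are coprime, then the setwise stabiliser G_B of B in G is a complement to P in N_G(P). -/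
open Module Submodule

variable {V : Type*} [NormedAddCommGroup V] [InnerProductSpace ℂ V] [FiniteDimensional ℂ V]

open scoped ComplexInnerProductSpace
set_option linter.unusedSectionVars false

section AuxLemmas

-- uniqueness of scalar
lemma auxSmulCancel {a : V} (ha : a ≠ 0) {c d : ℂ} (h : c • a = d • a) : c = d :=
  smul_left_injective ℂ ha h

-- scalar nonzero
lemma auxScalarNeZero (g : V ≃ₗᵢ[ℂ] V) {a : V} (ha : a ≠ 0) {c : ℂ} (h : g a = c • a) :
    c ≠ 0 := by
  intro h0
  apply ha
  have : g a = g 0 := by rw [h, h0, zero_smul, map_zero]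
  exact g.injective this

-- inverse scaling
lemma auxInvSmul (g : V ≃ₗᵢ[ℂ] V) {a : V} (ha : a ≠ 0) {c : ℂ} (h : g a = c • a) :
    g⁻¹ a = c⁻¹ • a := by
  have hc := auxScalarNeZero g ha h
  have h1 : g⁻¹ (g a) = a := g.symm_apply_apply a
  rw [h, map_smul] at h1
  have h2 : c⁻¹ • a = g⁻¹ a := by rw [inv_smul_eq_iff₀ hc]; exact h1.symm
  exact h2.symm

-- zpow scaling
lemma auxZpowSmul (g : V ≃ₗᵢ[ℂ] V) {a : V} (ha : a ≠ 0) {c : ℂ} (h : g a = c • a) :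
    ∀ n : ℤ, (g ^ n) a = (c ^ n) • a := by
  have hc := auxScalarNeZero g ha h
  have hnat : ∀ n : ℕ, (g ^ n) a = (c ^ n) • a := by
    intro n
    induction n with
    | zero => simp
    | succ m ih =>
      have : g ^ (m + 1) = g * g ^ m := by rw [pow_succ']
      rw [this]
      show g ((g ^ m) a) = c ^ (m + 1) • a
      rw [ih, map_smul, h, smul_smul, pow_succ, mul_comm]
  intro n
  cases n with
  | ofNat m => simpa using hnat m
  | negSucc m =>
    have h1 : (g ^ (m + 1)) a = (c ^ (m + 1)) • a := hnat (m + 1)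
    have h2 : (g ^ (m + 1))⁻¹ a = (c ^ (m + 1))⁻¹ • a :=
      auxInvSmul _ ha h1
    rw [zpow_negSucc, zpow_negSucc, h2]

-- rigidity: two isometries agreeing on a and on the orthogonal complement are equal
lemma auxExt {a : V} (s t : V ≃ₗᵢ[ℂ] V) (h1 : s a = t a)
    (h2 : ∀ h ∈ (span ℂ ({a} : Set V))ᗮ, s h = t h) : s = t := by
  ext x
  have hx : x ∈ (span ℂ ({a} : Set V)) ⊔ (span ℂ ({a} : Set V))ᗮ := by
    rw [Submodule.sup_orthogonal_of_hasOrthogonalProjection]; trivial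
  obtain ⟨y, hy, z, hz, rfl⟩ := Submodule.mem_sup.mp hx
  obtain ⟨c, rfl⟩ := Submodule.mem_span_singleton.mp hy
  rw [map_add, map_add, map_smul, map_smul, h1, h2 z hz]

-- component uniqueness in orthogonal decomposition
lemma auxComp {K : Submodule ℂ V} {y₁ y₂ z₁ z₂ : V} (hy₁ : y₁ ∈ K) (hy₂ : y₂ ∈ K)
    (hz₁ : z₁ ∈ Kᗮ) (hz₂ : z₂ ∈ Kᗮ) (h : y₁ + z₁ = y₂ + z₂) : z₁ = z₂ := by
  have h1 : z₁ - z₂ = y₂ - y₁ := by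
    have := h
    rw [← sub_eq_zero] at this ⊢
    rw [← this]; abel
  have hK : z₁ - z₂ ∈ K := h1 ▸ K.sub_mem hy₂ hy₁
  have hK' : z₁ - z₂ ∈ Kᗮ := Submodule.sub_mem _ hz₁ hz₂
  have := Submodule.disjoint_def.mp (Submodule.orthogonal_disjoint K) _ hK hK'
  exact sub_eq_zero.mp this

end AuxLemmas

section Aux2

lemma memSetStab_iff {G : Subgroup (V ≃ₗᵢ[ℂ] V)} {U : Set V} {g : V ≃ₗᵢ[ℂ] V} :
    g ∈ setStab G U ↔ g ∈ G ∧ ∀ v, v ∈ U ↔ g v ∈ U := Iff.rfl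

lemma memNormIn_iff {G P : Subgroup (V ≃ₗᵢ[ℂ] V)} {g : V ≃ₗᵢ[ℂ] V} :
    g ∈ normIn G P ↔ g ∈ G ∧ g ∈ Subgroup.normalizer (P : Set (V ≃ₗᵢ[ℂ] V)) := Subgroup.mem_inf

variable {r : V ≃ₗᵢ[ℂ] V} {a : V} {ζ : ℂ}

lemma auxFixedEq (ha : a ≠ 0) (hζ : ζ ≠ 1) (hra : r a = ζ • a)
    (hfr : finrank ℂ (fixedBy r) = finrank ℂ V - 1) :
    fixedBy r = (span ℂ ({a} : Set V))ᗮ := by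
  have hle : fixedBy r ≤ (span ℂ ({a} : Set V))ᗮ := by
    intro h hh
    have hrh : r h = h := hh
    rw [Submodule.mem_orthogonal]
    intro u hu
    obtain ⟨c, rfl⟩ := Submodule.mem_span_singleton.mp hu
    rw [inner_smul_left]
    have h1 : ⟪a, h⟫ = ⟪r a, r h⟫ := (r.inner_map_map a h).symm
    rw [hra, hrh, inner_smul_left] at h1
    have h2 : ⟪a, h⟫ = 0 := by
      by_contra hne
      have h3 : (1 : ℂ) * ⟪a, h⟫ = (starRingEnd ℂ) ζ * ⟪a, h⟫ := by rw [one_mul]; exact h1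
      have h4 : (1 : ℂ) = (starRingEnd ℂ) ζ := mul_right_cancel₀ hne h3
      apply hζ
      have := congrArg (starRingEnd ℂ) h4
      simpa using this.symm
    rw [h2, mul_zero]
  apply Submodule.eq_of_le_of_finrank_eq hle
  have hdim : finrank ℂ ((span ℂ ({a} : Set V))ᗮ) = finrank ℂ V - 1 := by
    have h := Submodule.finrank_add_finrank_orthogonal (K := span ℂ ({a} : Set V))
    rw [finrank_span_singleton ha] at h
    omega
  rw [hfr, hdim]

lemma auxPowFix (g : V ≃ₗᵢ[ℂ] V) {h : V} (hgh : g h = h) : ∀ n : ℤ, (g ^ n) h = h := by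
  have hnat : ∀ n : ℕ, (g ^ n) h = h := by
    intro n
    induction n with
    | zero => rfl
    | succ m ih =>
      have : g ^ (m + 1) = g * g ^ m := by rw [pow_succ']
      rw [this]; show g ((g ^ m) h) = h; rw [ih, hgh]
  intro n
  cases n with
  | ofNat m => simpa using hnat m
  | negSucc m =>
    rw [zpow_negSucc]
    have h1 : (g ^ (m + 1))⁻¹ ((g ^ (m + 1)) h) = h := (g ^ (m + 1)).symm_apply_apply h
    rwa [hnat (m + 1)] at h1

lemma auxZpowEqOneIff (ha : a ≠ 0) (hζ : ζ ≠ 1) (hra : r a = ζ • a)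
    (hfr : finrank ℂ (fixedBy r) = finrank ℂ V - 1) :
    ∀ n : ℤ, r ^ n = 1 ↔ ζ ^ n = 1 := by
  have hζ0 : ζ ≠ 0 := auxScalarNeZero r ha hra
  have hfix : ∀ h ∈ (span ℂ ({a} : Set V))ᗮ, r h = h := by
    rw [← auxFixedEq ha hζ hra hfr]; exact fun h hh => hh
  intro n
  constructor
  · intro h1
    have h2 : (r ^ n) a = (ζ ^ n) • a := auxZpowSmul r ha hra n
    rw [h1] at h2
    have h3 : (1 : ℂ) • a = ζ ^ n • a := by rw [one_smul]; exact h2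
    exact (auxSmulCancel ha h3).symm
  · intro h1
    apply auxExt (a := a) (r ^ n) 1
    · rw [auxZpowSmul r ha hra n, h1, one_smul]; rfl
    · intro h hh
      have : (r ^ n) h = h := by
        apply auxPowFix r (hfix h hh)
      rw [this]; rfl

lemma auxOrderZeta (ha : a ≠ 0) (hζ : ζ ≠ 1) (hra : r a = ζ • a)
    (hfr : finrank ℂ (fixedBy r) = finrank ℂ V - 1) :
    orderOf ζ = orderOf r := by
  rw [orderOf_eq_orderOf_iff]
  intro n
  have := auxZpowEqOneIff ha hζ hra hfr (n : ℤ)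
  rw [zpow_natCast, zpow_natCast] at this
  exact this.symm

lemma auxPreserveOrtho (g : V ≃ₗᵢ[ℂ] V) (ha : a ≠ 0) {c : ℂ} (hc : g a = c • a) :
    ∀ h ∈ (span ℂ ({a} : Set V))ᗮ, g h ∈ (span ℂ ({a} : Set V))ᗮ := by
  intro h hh
  have hc0 : c ≠ 0 := auxScalarNeZero g ha hc
  rw [Submodule.mem_orthogonal]
  intro u hu
  obtain ⟨d, rfl⟩ := Submodule.mem_span_singleton.mp hu
  rw [inner_smul_left]
  have hga : g (c⁻¹ • a) = a := by
    rw [map_smul, hc, smul_smul, inv_mul_cancel₀ hc0, one_smul]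
  have h1 : ⟪a, g h⟫ = ⟪c⁻¹ • a, h⟫ := by
    rw [← g.inner_map_map (c⁻¹ • a) h, hga]
  have h2 : ⟪a, h⟫ = 0 :=
    (Submodule.mem_orthogonal _ h).mp hh a (Submodule.mem_span_singleton_self a)
  rw [h1, inner_smul_left, h2, mul_zero, mul_zero]

lemma auxCommute (g : V ≃ₗᵢ[ℂ] V) (ha : a ≠ 0) (hra : r a = ζ • a)
    (hfix : ∀ h ∈ (span ℂ ({a} : Set V))ᗮ, r h = h)
    {c : ℂ} (hc : g a = c • a) : g * r = r * g := by
  apply auxExt (a := a)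
  · show g (r a) = r (g a)
    rw [hra, hc, map_smul, map_smul, hra, hc, smul_smul, smul_smul, mul_comm]
  · intro h hh
    show g (r h) = r (g h)
    rw [hfix h hh, hfix _ (auxPreserveOrtho g ha hc h hh)]

lemma auxMemNormIn (G : Subgroup (V ≃ₗᵢ[ℂ] V)) (g : V ≃ₗᵢ[ℂ] V) (ha : a ≠ 0)
    (hra : r a = ζ • a) (hfix : ∀ h ∈ (span ℂ ({a} : Set V))ᗮ, r h = h)
    (hgG : g ∈ G) {c : ℂ} (hc : g a = c • a) :
    g ∈ normIn G (Subgroup.zpowers r) := by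
  rw [memNormIn_iff]
  refine ⟨hgG, ?_⟩
  have hcomm : Commute g r := auxCommute g ha hra hfix hc
  rw [Subgroup.mem_normalizer_iff]
  intro h
  constructor
  · intro hh
    obtain ⟨n, rfl⟩ := Subgroup.mem_zpowers_iff.mp hh
    have : g * r ^ n * g⁻¹ = r ^ n := by
      rw [(hcomm.zpow_right n).eq, mul_assoc, mul_inv_cancel, mul_one]
    rw [this]
    exact Subgroup.zpow_mem _ (Subgroup.mem_zpowers r) n
  · intro hh
    obtain ⟨n, heq⟩ := Subgroup.mem_zpowers_iff.mp hh
    have h1 : h = g⁻¹ * r ^ n * g := by rw [heq]; group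
    have h2 : g⁻¹ * r ^ n * g = r ^ n := by
      rw [((hcomm.zpow_right n).inv_left).eq, mul_assoc, inv_mul_cancel, mul_one]
    rw [h1, h2]
    exact Subgroup.zpow_mem _ (Subgroup.mem_zpowers r) n

lemma auxScalarOfMem (G : Subgroup (V ≃ₗᵢ[ℂ] V)) (g : V ≃ₗᵢ[ℂ] V) (ha : a ≠ 0)
    (hζ : ζ ≠ 1) (hra : r a = ζ • a)
    (hfr : finrank ℂ (fixedBy r) = finrank ℂ V - 1)
    (hg : g ∈ normIn G (Subgroup.zpowers r)) :
    ∃ c : ℂ, g a = c • a := by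
  have hζ0 : ζ ≠ 0 := auxScalarNeZero r ha hra
  have hfix : ∀ h ∈ (span ℂ ({a} : Set V))ᗮ, r h = h := by
    rw [← auxFixedEq ha hζ hra hfr]; exact fun h hh => hh
  have hgnorm : g ∈ Subgroup.normalizer ((Subgroup.zpowers r : Subgroup (V ≃ₗᵢ[ℂ] V)) : Set (V ≃ₗᵢ[ℂ] V)) := (memNormIn_iff.mp hg).2
  have hmem : g⁻¹ * r * g ∈ Subgroup.zpowers r := by
    have := (Subgroup.mem_normalizer_iff.mp hgnorm (g⁻¹ * r * g))
    apply this.mpr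
    have : g * (g⁻¹ * r * g) * g⁻¹ = r := by group
    rw [this]
    exact Subgroup.mem_zpowers r
  obtain ⟨n, heq⟩ := Subgroup.mem_zpowers_iff.mp hmem
  have hrg : r * g = g * r ^ n := by rw [heq]; group
  have hkey : r (g a) = (ζ ^ n) • g a := by
    have h1 : (r * g) a = (g * r ^ n) a := by rw [hrg]
    have h2 : (g * r ^ n) a = g ((r ^ n) a) := rfl
    rw [h2, auxZpowSmul r ha hra n, map_smul] at h1
    exact h1
  by_cases hζn : ζ ^ n = 1
  · exfalso
    have hrn : r ^ n = 1 := (auxZpowEqOneIff ha hζ hra hfr n).mpr hζn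
    rw [hrn, mul_one] at hrg
    have hr1 : r = 1 := by
      have := hrg
      calc r = r * g * g⁻¹ := by group
        _ = g * g⁻¹ := by rw [this]
        _ = 1 := by group
    apply hζ
    have : r a = a := by rw [hr1]; rfl
    rw [hra] at this
    have : ζ • a = (1 : ℂ) • a := by rw [one_smul]; exact this
    exact auxSmulCancel ha this
  · have hx : g a ∈ (span ℂ ({a} : Set V)) ⊔ (span ℂ ({a} : Set V))ᗮ := by
      rw [Submodule.sup_orthogonal_of_hasOrthogonalProjection]; trivial
    obtain ⟨y, hy, z, hz, hdecomp⟩ := Submodule.mem_sup.mp hx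
    obtain ⟨d, rfl⟩ := Submodule.mem_span_singleton.mp hy
    have hE : (d * ζ) • a + z = (ζ ^ n * d) • a + (ζ ^ n) • z := by
      have h1 : r (g a) = (d * ζ) • a + z := by
        rw [← hdecomp, map_add, map_smul, hra, hfix z hz, smul_smul]
      have h2 : r (g a) = (ζ ^ n * d) • a + (ζ ^ n) • z := by
        rw [hkey, ← hdecomp, smul_add, smul_smul]
      rw [← h1, h2]
    have hzz : z = (ζ ^ n) • z := by
      apply auxComp (K := span ℂ ({a} : Set V)) _ _ hz (Submodule.smul_mem _ _ hz) hE
      · exact Submodule.smul_mem _ _ (Submodule.mem_span_singleton_self a)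
      · exact Submodule.smul_mem _ _ (Submodule.mem_span_singleton_self a)
    have hz0 : z = 0 := by
      have h1 : (1 - ζ ^ n) • z = 0 := by
        rw [sub_smul, one_smul, ← hzz, sub_self]
      rcases smul_eq_zero.mp h1 with h | h
      · exact absurd (by linear_combination -h : ζ ^ n = 1) hζn
      · exact h
    exact ⟨d, by rw [← hdecomp, hz0, add_zero]⟩

end Aux2

section Aux3

variable {r : V ≃ₗᵢ[ℂ] V} {a : V} {ζ : ℂ}

/-- The set of scalars `ξ` such that some element of `N_G(⟨r⟩)` maps `a` to `ξ • a`. -/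
abbrev rootScalars (G : Subgroup (V ≃ₗᵢ[ℂ] V)) (r : V ≃ₗᵢ[ℂ] V) (a : V) : Set ℂ :=
  {ξ : ℂ | ∃ g ∈ normIn G (Subgroup.zpowers r), g a = ξ • a}

variable {G : Subgroup (V ≃ₗᵢ[ℂ] V)}

lemma rootScalars_one : (1 : ℂ) ∈ rootScalars G r a :=
  ⟨1, Subgroup.one_mem _, by rw [one_smul]; rfl⟩

lemma rootScalars_ne_zero (ha : a ≠ 0) {ξ : ℂ} (h : ξ ∈ rootScalars G r a) : ξ ≠ 0 := by
  obtain ⟨g, _, hg⟩ := h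
  exact auxScalarNeZero g ha hg

lemma rootScalars_mul {ξ₁ ξ₂ : ℂ} (h1 : ξ₁ ∈ rootScalars G r a) (h2 : ξ₂ ∈ rootScalars G r a) :
    ξ₁ * ξ₂ ∈ rootScalars G r a := by
  obtain ⟨g₁, hg₁, hga₁⟩ := h1
  obtain ⟨g₂, hg₂, hga₂⟩ := h2
  refine ⟨g₁ * g₂, Subgroup.mul_mem _ hg₁ hg₂, ?_⟩
  show g₁ (g₂ a) = (ξ₁ * ξ₂) • a
  rw [hga₂, map_smul, hga₁, smul_smul, mul_comm]

lemma rootScalars_inv (ha : a ≠ 0) {ξ : ℂ} (h : ξ ∈ rootScalars G r a) :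
    ξ⁻¹ ∈ rootScalars G r a := by
  obtain ⟨g, hg, hga⟩ := h
  exact ⟨g⁻¹, Subgroup.inv_mem _ hg, auxInvSmul g ha hga⟩

lemma rootScalars_zpow (ha : a ≠ 0) {ξ : ℂ} (h : ξ ∈ rootScalars G r a) (n : ℤ) :
    ξ ^ n ∈ rootScalars G r a := by
  obtain ⟨g, hg, hga⟩ := h
  exact ⟨g ^ n, Subgroup.zpow_mem _ hg n, auxZpowSmul g ha hga n⟩

lemma rootScalars_finite [Finite G] (ha : a ≠ 0) : (rootScalars G r a).Finite := by
  apply Set.Finite.subset (Set.finite_range (fun g : G => ⟪a, (g : V ≃ₗᵢ[ℂ] V) a⟫ / ⟪a, a⟫))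
  rintro ξ ⟨g, hg, hga⟩
  have hgG : g ∈ G := (memNormIn_iff.mp hg).1
  refine ⟨⟨g, hgG⟩, ?_⟩
  show ⟪a, g a⟫ / ⟪a, a⟫ = ξ
  rw [hga, inner_smul_right]
  rw [mul_div_assoc, div_self (inner_self_ne_zero.mpr ha), mul_one]

lemma rootScalars_pow_card [Finite G] (ha : a ≠ 0) {ξ : ℂ} (h : ξ ∈ rootScalars G r a) :
    ξ ^ (Nat.card (rootScalars G r a)) = 1 := by
  classical
  set S := rootScalars G r a with hS
  let M : Subgroup ℂˣ :=
    { carrier := {u : ℂˣ | (u : ℂ) ∈ S}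
      one_mem' := rootScalars_one
      mul_mem' := fun hu hv => rootScalars_mul hu hv
      inv_mem' := fun {u} hu => by
        have := rootScalars_inv ha hu
        show ((u⁻¹ : ℂˣ) : ℂ) ∈ S
        rw [Units.val_inv_eq_inv_val]
        exact this }
  have e : M ≃ S := by
    refine ⟨fun u => ⟨(u : ℂˣ), u.2⟩,
      fun s => ⟨Units.mk0 s.1 (rootScalars_ne_zero ha s.2), s.2⟩, ?_, ?_⟩
    · intro u; ext; rfl
    · intro s; rfl
  have hfin : S.Finite := rootScalars_finite ha
  haveI : Finite S := hfin.to_subtype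
  haveI : Finite M := Finite.of_equiv _ e.symm
  have hcard : Nat.card S = Nat.card M := (Nat.card_congr e).symm
  set u : M := ⟨Units.mk0 ξ (rootScalars_ne_zero ha h), h⟩ with hu
  have h1 : u ^ (Nat.card M) = 1 := pow_card_eq_one'
  have h3 : ((u ^ Nat.card M : M) : ℂˣ) = 1 := by rw [h1]; rfl
  have h4 : (((u ^ Nat.card M : M) : ℂˣ) : ℂ) = 1 := by rw [h3]; rfl
  rw [hcard]
  rw [SubmonoidClass.coe_pow] at h4
  rw [Units.val_pow_eq_pow_val] at h4
  exact h4

end Aux3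

/-- Lemma `lemma:stab`, first part: if `m/k` and `k` are coprime, the
setwise stabiliser of `B = {ξ^k a : ξ ∈ μ}` is a complement to `P = ⟨r⟩` in `N_G(P)`. -/
theorem stab_roots_complement_of_coprime
    (G : Subgroup (V ≃ₗᵢ[ℂ] V)) [Finite G] (hG : IsReflectionGroup G)
    (r : V ≃ₗᵢ[ℂ] V) (hr : IsReflection r) (hrG : r ∈ G) (k : ℕ) (hk : orderOf r = k)
    (a : V) (ha : a ≠ 0) (ζ : ℂ) (hζ : ζ ≠ 1) (hra : r a = ζ • a)
    (hpar : ∃ X : Set V, Subgroup.zpowers r = pointStab G X)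
    (mm : ℕ)
    (hmm : mm = Nat.card {ξ : ℂ | ∃ g ∈ normIn G (Subgroup.zpowers r), g a = ξ • a})
    (hdvd : k ∣ mm) (hcop : Nat.Coprime (mm / k) k) :
    setStab G ((fun ξ : ℂ => ξ ^ k • a) ''
        {ξ : ℂ | ∃ g ∈ normIn G (Subgroup.zpowers r), g a = ξ • a}) ⊓
      Subgroup.zpowers r = ⊥ ∧
    Subgroup.zpowers r ⊔ setStab G ((fun ξ : ℂ => ξ ^ k • a) ''
        {ξ : ℂ | ∃ g ∈ normIn G (Subgroup.zpowers r), g a = ξ • a}) =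
      normIn G (Subgroup.zpowers r) := by
  classical
  have hSeq : {ξ : ℂ | ∃ g ∈ normIn G (Subgroup.zpowers r), g a = ξ • a} = rootScalars G r a := rfl
  set S := rootScalars G r a with hSdef
  set B := (fun ξ : ℂ => ξ ^ k • a) '' S with hBdef
  have hζ0 : ζ ≠ 0 := auxScalarNeZero r ha hra
  have hk0 : k ≠ 0 := by rw [← hk]; exact hr.1.orderOf_pos.ne'
  haveI : NeZero k := ⟨hk0⟩
  have hfr := hr.2
  have hfix : ∀ h ∈ (span ℂ ({a} : Set V))ᗮ, r h = h := by
    rw [← auxFixedEq ha hζ hra hfr]; exact fun h hh => hh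
  have hzord : orderOf ζ = k := by rw [auxOrderZeta ha hζ hra hfr, hk]
  have hζk : ζ ^ k = 1 := by rw [← hzord]; exact pow_orderOf_eq_one ζ
  have hprim : IsPrimitiveRoot ζ k := by rw [← hzord]; exact IsPrimitiveRoot.orderOf ζ
  have hiff : ∀ n : ℤ, r ^ n = 1 ↔ ζ ^ n = 1 := auxZpowEqOneIff ha hζ hra hfr
  have hSmm : ∀ ξ ∈ S, ξ ^ mm = 1 := by
    intro ξ hξ
    rw [hmm, hSeq]
    exact rootScalars_pow_card ha hξ
  have haB : a ∈ B := ⟨1, rootScalars_one, by simp⟩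
  have hrzpow : ∀ n : ℤ, (r ^ n) a = (ζ ^ n) • a := auxZpowSmul r ha hra
  constructor
  · -- intersection is trivial
    rw [eq_bot_iff]
    intro g hg
    obtain ⟨hgB, hgP⟩ := Subgroup.mem_inf.mp hg
    obtain ⟨n, rfl⟩ := Subgroup.mem_zpowers_iff.mp hgP
    have h1 : (r ^ n) a ∈ B := ((memSetStab_iff.mp hgB).2 a).mp haB
    obtain ⟨ξ, hξS, hξeq⟩ := h1
    have h3 : ξ ^ k = ζ ^ n := auxSmulCancel ha (hξeq.trans (hrzpow n))
    have e1 : (ζ ^ n) ^ k = 1 := by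
      rw [← zpow_natCast (ζ ^ n), ← zpow_mul, mul_comm, zpow_mul, zpow_natCast, hζk, one_zpow]
    have e2 : (ζ ^ n) ^ (mm / k) = 1 := by
      rw [← h3, ← pow_mul, Nat.mul_div_cancel' hdvd]
      exact hSmm ξ hξS
    have hdvd1 : orderOf (ζ ^ n) ∣ 1 := by
      have := Nat.dvd_gcd (orderOf_dvd_of_pow_eq_one e2) (orderOf_dvd_of_pow_eq_one e1)
      rwa [hcop] at this
    have hz1 : ζ ^ n = 1 := orderOf_eq_one_iff.mp (Nat.dvd_one.mp hdvd1)
    have hr1 : r ^ n = 1 := (hiff n).mpr hz1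
    rw [hr1]
    exact Subgroup.one_mem ⊥
  · -- the join is the normaliser
    apply le_antisymm
    · apply sup_le
      · exact le_inf (Subgroup.zpowers_le.mpr hrG) Subgroup.le_normalizer
      · intro g hgB
        obtain ⟨hgG, hgiff⟩ := memSetStab_iff.mp hgB
        obtain ⟨ξ, hξS, hξeq⟩ := (hgiff a).mp haB
        exact auxMemNormIn G g ha hra hfix hgG hξeq.symm
    · intro g hgN
      obtain ⟨ξ, hgaξ⟩ := auxScalarOfMem G g ha hζ hra hfr hgN
      have hξS : ξ ∈ S := ⟨g, hgN, hgaξ⟩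
      have hξ0 : ξ ≠ 0 := rootScalars_ne_zero ha hξS
      have hξmm : ξ ^ mm = 1 := hSmm ξ hξS
      have hcop' : IsCoprime ((mm / k : ℕ) : ℤ) (k : ℤ) := by
        rw [Int.isCoprime_iff_gcd_eq_one]
        exact_mod_cast hcop
      obtain ⟨p, q, hpq⟩ := hcop'
      set α := ξ ^ (p * ((mm / k : ℕ) : ℤ)) with hα
      set β := ξ ^ q with hβ
      have hcast : ((mm / k : ℕ) : ℤ) * (k : ℤ) = (mm : ℤ) := by
        exact_mod_cast congrArg (Nat.cast : ℕ → ℤ) (Nat.div_mul_cancel hdvd)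
      have hαk : α ^ k = 1 := by
        have h1 : α ^ k = ξ ^ (p * ((mm / k : ℕ) : ℤ) * (k : ℤ)) := by
          rw [hα, ← zpow_natCast α k, ← zpow_mul]
        rw [h1, mul_assoc, hcast, mul_comm p (mm : ℤ), zpow_mul, zpow_natCast, hξmm, one_zpow]
      have hfact : ξ = α * β ^ k := by
        rw [hα, hβ, ← zpow_natCast (ξ ^ q), ← zpow_mul, ← zpow_add₀ hξ0, hpq, zpow_one]
      obtain ⟨i, hik, hζiα⟩ := hprim.eq_pow_of_pow_eq_one hαk
      have hβS : β ∈ S := rootScalars_zpow ha hξS q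
      have hβ0 : β ≠ 0 := rootScalars_ne_zero ha hβS
      have hα0 : α ≠ 0 := by
        intro h0
        rw [h0, zero_pow hk0] at hαk
        exact zero_ne_one hαk
      set g' := (r ^ i)⁻¹ * g with hg'def
      have hgG : g ∈ G := (memNormIn_iff.mp hgN).1
      have hriG : r ^ i ∈ G := pow_mem hrG i
      have hg'G : g' ∈ G := G.mul_mem (G.inv_mem hriG) hgG
      have hri_a : (r ^ i) a = (ζ ^ i) • a := by
        have := hrzpow (i : ℤ)
        rwa [zpow_natCast, zpow_natCast] at this
      have hg'a : g' a = (β ^ k) • a := by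
        show (r ^ i)⁻¹ (g a) = (β ^ k) • a
        rw [hgaξ, map_smul, auxInvSmul (r ^ i) ha hri_a, smul_smul]
        congr 1
        have hζi0 : (ζ : ℂ) ^ i ≠ 0 := pow_ne_zero _ hζ0
        rw [hfact, ← hζiα, mul_comm (ζ ^ i) (β ^ k), mul_assoc, mul_inv_cancel₀ hζi0, mul_one]
      have hβk0 : β ^ k ≠ 0 := pow_ne_zero _ hβ0
      have hg'B : g' ∈ setStab G B := by
        rw [memSetStab_iff]
        refine ⟨hg'G, fun v => ?_⟩
        constructor
        · rintro ⟨η, hηS, rfl⟩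
          refine ⟨η * β, rootScalars_mul hηS hβS, ?_⟩
          show (η * β) ^ k • a = g' (η ^ k • a)
          rw [map_smul, hg'a, smul_smul, mul_pow]
        · rintro ⟨η, hηS, hηeq⟩
          have hηeq' : η ^ k • a = g' v := hηeq
          have h2 : v = g'⁻¹ (η ^ k • a) := by
            rw [hηeq']
            exact (g'.symm_apply_apply v).symm
          rw [map_smul, auxInvSmul g' ha hg'a, smul_smul] at h2
          refine ⟨η * β⁻¹, rootScalars_mul hηS (rootScalars_inv ha hβS), ?_⟩
          show (η * β⁻¹) ^ k • a = v
          rw [h2, mul_pow, inv_pow]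
      have hdecg : g = (r ^ i) * g' := by rw [hg'def]; group
      rw [hdecg]
      exact Subgroup.mul_mem _
        (Subgroup.mem_sup_left (Subgroup.pow_mem _ (Subgroup.mem_zpowers r) i))
        (Subgroup.mem_sup_right hg'B)
end

section
/- Let P = ⟨r⟩ be a rank 1 parabolic subgroup of a finite unitary reflection group G, r of order k with root a. Let μ = {ξ : g(a) = ξa for some g ∈ N_G(P)}, of order m. If there exists a set D of scalar multiples of a whose setwise stabiliser in G is a complement to P in N_G(P), then m/k and k are coprime. -/
open Module Submodule

variable {V : Type*} [NormedAddCommGroup V] [InnerProductSpace ℂ V] [FiniteDimensional ℂ V]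

section Aux

lemma cardSupAux {M : Type*} [CommGroup M] (A B : Subgroup M) (h : A ⊓ B = ⊥) :
    Nat.card ↥(A ⊔ B) = Nat.card A * Nat.card B := by
  let f : A × B →* M := (A.subtype.comp (MonoidHom.fst A B)) * (B.subtype.comp (MonoidHom.snd A B))
  have hf : ∀ p : A × B, f p = (p.1 : M) * p.2 := fun p => rfl
  have hinj : Function.Injective f := by
    rw [injective_iff_map_eq_one]
    rintro ⟨x, y⟩ hxy
    rw [hf] at hxy
    have hx : (x : M) = (y : M)⁻¹ := eq_inv_of_mul_eq_one_left hxy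
    have hxA : (x : M) ∈ A ⊓ B := ⟨x.2, hx ▸ B.inv_mem y.2⟩
    rw [h, Subgroup.mem_bot] at hxA
    have hy : (y : M) = 1 := by rw [hxA] at hx; simpa using hx.symm
    exact Prod.ext (Subtype.ext hxA) (Subtype.ext hy)
  have hrange : f.range = A ⊔ B := by
    apply le_antisymm
    · rintro _ ⟨⟨x, y⟩, rfl⟩
      exact mul_mem (Subgroup.mem_sup_left x.2) (Subgroup.mem_sup_right y.2)
    · rw [sup_le_iff]
      constructor
      · intro x hx; exact ⟨(⟨⟨x, hx⟩, 1⟩ : A × B), by simp [hf]⟩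
      · intro y hy; exact ⟨(⟨1, ⟨y, hy⟩⟩ : A × B), by simp [hf]⟩
  rw [← hrange]
  rw [Nat.card_congr (MonoidHom.ofInjective hinj).toEquiv.symm, Nat.card_prod]

/-- The group of eigenvalues of elements of `N` on the line through `a`. -/
def eigGroup (N : Subgroup (V ≃ₗᵢ[ℂ] V)) (a : V) : Subgroup ℂˣ where
  carrier := {u | ∃ g ∈ N, g a = (u : ℂ) • a}
  one_mem' := ⟨1, N.one_mem, by simp⟩
  mul_mem' := by
    rintro u v ⟨g, hg, hg'⟩ ⟨g', hg2, hg2'⟩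
    refine ⟨g * g', N.mul_mem hg hg2, ?_⟩
    show g (g' a) = _
    rw [hg2', map_smul, hg', smul_smul, Units.val_mul, mul_comm (v : ℂ)]
  inv_mem' := by
    rintro u ⟨g, hg, hg'⟩
    refine ⟨g⁻¹, N.inv_mem hg, ?_⟩
    have h1 : g⁻¹ (g a) = a := g.symm_apply_apply a
    rw [hg', map_smul] at h1
    rw [Units.val_inv_eq_inv_val]
    rw [eq_inv_smul_iff₀ (Units.ne_zero u)]
    exact h1

/-- The subgroup of isometries whose eigenvalue on `a` lies in `U`. -/
def eigIn (a : V) (U : Subgroup ℂˣ) : Subgroup (V ≃ₗᵢ[ℂ] V) where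
  carrier := {g | ∃ u : ℂˣ, u ∈ U ∧ g a = (u : ℂ) • a}
  one_mem' := ⟨1, U.one_mem, by simp⟩
  mul_mem' := by
    rintro g g' ⟨u, hu, hg'⟩ ⟨v, hv, hg2'⟩
    refine ⟨u * v, U.mul_mem hu hv, ?_⟩
    show g (g' a) = _
    rw [hg2', map_smul, hg', smul_smul, Units.val_mul, mul_comm (v : ℂ)]
  inv_mem' := by
    rintro g ⟨u, hu, hg'⟩
    refine ⟨u⁻¹, U.inv_mem hu, ?_⟩
    have h1 : g⁻¹ (g a) = a := g.symm_apply_apply a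
    rw [hg', map_smul] at h1
    rw [Units.val_inv_eq_inv_val, eq_inv_smul_iff₀ (Units.ne_zero u)]
    exact h1

lemma pow_apply_eig (g : V ≃ₗᵢ[ℂ] V) (a : V) (u : ℂˣ) (h : g a = (u : ℂ) • a) :
    ∀ n : ℕ, (g ^ n) a = ((u ^ n : ℂˣ) : ℂ) • a := by
  intro n
  induction n with
  | zero => simp
  | succ n ih =>
    have : (g ^ (n + 1)) a = (g ^ n) (g a) := by
      rw [pow_succ]; rfl
    rw [this, h, map_smul, ih, smul_smul, pow_succ, Units.val_mul, mul_comm ((u^n : ℂˣ) : ℂ)]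

lemma zpow_apply_eig (g : V ≃ₗᵢ[ℂ] V) (a : V) (u : ℂˣ) (h : g a = (u : ℂ) • a) :
    ∀ i : ℤ, (g ^ i) a = ((u ^ i : ℂˣ) : ℂ) • a := by
  have hinv : g⁻¹ a = ((u⁻¹ : ℂˣ) : ℂ) • a := by
    have h1 : g⁻¹ (g a) = a := g.symm_apply_apply a
    rw [h, map_smul] at h1
    rw [Units.val_inv_eq_inv_val, eq_inv_smul_iff₀ (Units.ne_zero u)]
    exact h1
  intro i
  induction i using Int.induction_on with
  | zero => simp
  | succ n ih =>
    have : (g ^ ((n : ℤ) + 1)) a = (g ^ (n : ℤ)) (g a) := by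
      rw [zpow_add_one]; rfl
    rw [this, h, map_smul, ih, smul_smul, zpow_add_one, Units.val_mul,
      mul_comm ((u ^ (n : ℤ) : ℂˣ) : ℂ)]
  | pred n ih =>
    have : (g ^ (-(n : ℤ) - 1)) a = (g ^ (-(n : ℤ))) (g⁻¹ a) := by
      rw [zpow_sub_one]; rfl
    rw [this, hinv, map_smul, ih, smul_smul, zpow_sub_one, Units.val_mul,
      mul_comm ((u ^ (-(n : ℤ)) : ℂˣ) : ℂ)]

end Aux

/-- Lemma `lemma:stab`, converse: if the stabiliser of a set of scalar
multiples of `a` is a complement to `P = ⟨r⟩` in `N_G(P)`, then `m/k` and `k` are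
coprime. -/


theorem coprime_of_stab_scalar_multiples_complement
    (G : Subgroup (V ≃ₗᵢ[ℂ] V)) [Finite G] (hG : IsReflectionGroup G)
    (r : V ≃ₗᵢ[ℂ] V) (hr : IsReflection r) (hrG : r ∈ G) (k : ℕ) (hk : orderOf r = k)
    (a : V) (ha : a ≠ 0) (ζ : ℂ) (hζ : ζ ≠ 1) (hra : r a = ζ • a)
    (hpar : ∃ X : Set V, Subgroup.zpowers r = pointStab G X)
    (mm : ℕ)
    (hmm : mm = Nat.card {ξ : ℂ | ∃ g ∈ normIn G (Subgroup.zpowers r), g a = ξ • a})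
    (hdvd : k ∣ mm)
    (D : Set V) (hD : ∀ v ∈ D, ∃ c : ℂ, v = c • a)
    (hcompl : setStab G D ⊓ Subgroup.zpowers r = ⊥ ∧
      Subgroup.zpowers r ⊔ setStab G D = normIn G (Subgroup.zpowers r)) :
    Nat.Coprime (mm / k) k := by
  classical
  have hk0 : k ≠ 0 := by rw [← hk]; exact hr.1.orderOf_pos.ne'
  have hζ0 : ζ ≠ 0 := by
    intro h0
    rw [h0, zero_smul] at hra
    exact ha (r.injective (by simpa using hra))
  set ζu : ℂˣ := Units.mk0 ζ hζ0 with hζudef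
  have hrau : r a = (ζu : ℂ) • a := hra
  have hsmulinj : ∀ c d : ℂ, c • a = d • a → c = d := fun c d h => smul_left_injective ℂ ha h
  have hr1 : r ≠ 1 := by
    intro h1
    apply hζ
    apply hsmulinj
    rw [← hra, h1, one_smul]
    rfl
  obtain ⟨b, hbD, hb0⟩ : ∃ v ∈ D, v ≠ 0 := by
    by_contra hcon
    push_neg at hcon
    have hrD : r ∈ setStab G D := by
      refine ⟨hrG, fun v => ?_⟩
      constructor
      · intro hv
        have hv0 : v = 0 := hcon v hv
        rw [hv0] at hv ⊢
        rwa [map_zero]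
      · intro hv
        have h0 : r v = 0 := hcon _ hv
        have hv0 : v = 0 := r.injective (by simpa using h0)
        rw [hv0] at hv ⊢
        rwa [map_zero] at hv
    have hmem : r ∈ setStab G D ⊓ Subgroup.zpowers r := ⟨hrD, Subgroup.mem_zpowers r⟩
    rw [hcompl.1, Subgroup.mem_bot] at hmem
    exact hr1 hmem
  obtain ⟨c₀, hc₀⟩ := hD b hbD
  have hc₀0 : c₀ ≠ 0 := by
    rintro rfl
    rw [zero_smul] at hc₀
    exact hb0 hc₀
  have hHN : setStab G D ≤ normIn G (Subgroup.zpowers r) := by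
    rw [← hcompl.2]; exact le_sup_right
  have hrN : r ∈ normIn G (Subgroup.zpowers r) :=
    ⟨hrG, Subgroup.le_normalizer (Subgroup.mem_zpowers r)⟩
  have hHeig : ∀ h ∈ setStab G D, ∃ u : ℂˣ, h a = (u : ℂ) • a := by
    intro h hh
    obtain ⟨hhG, hhD⟩ := hh
    have hbD' : h b ∈ D := (hhD b).mp hbD
    obtain ⟨c₁, hc₁⟩ := hD _ hbD'
    have hha : h a = (c₀⁻¹ * c₁) • a := by
      have hab : a = c₀⁻¹ • b := by rw [hc₀, smul_smul, inv_mul_cancel₀ hc₀0, one_smul]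
      have h5 : h a = h (c₀⁻¹ • b) := by rw [← hab]
      rw [h5, map_smul, hc₁, smul_smul]
    have hne : c₀⁻¹ * c₁ ≠ 0 := by
      intro h0
      rw [h0, zero_smul] at hha
      exact ha (h.injective (by simpa using hha))
    exact ⟨Units.mk0 _ hne, hha⟩
  set μ : Subgroup ℂˣ := eigGroup (normIn G (Subgroup.zpowers r)) a with hμdef
  set B : Subgroup ℂˣ := eigGroup (setStab G D) a with hBdef
  set A : Subgroup ℂˣ := Subgroup.zpowers ζu with hAdef
  -- mm is the cardinality of μ
  have hSval : {ξ : ℂ | ∃ g ∈ normIn G (Subgroup.zpowers r), g a = ξ • a}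
      = Units.val '' (μ : Set ℂˣ) := by
    ext ξ
    constructor
    · rintro ⟨g, hg, hge⟩
      have hξ0 : ξ ≠ 0 := by
        intro h0
        rw [h0, zero_smul] at hge
        exact ha (g.injective (by simpa using hge))
      exact ⟨Units.mk0 ξ hξ0, ⟨g, hg, hge⟩, rfl⟩
    · rintro ⟨u, ⟨g, hg, hge⟩, rfl⟩
      exact ⟨g, hg, hge⟩
  have hmmμ : mm = Nat.card μ := by
    rw [hmm, hSval, Nat.card_image_of_injective Units.val_injective]
    rfl
  -- μ is finite
  haveI : NeZero (Nat.card G) := ⟨Nat.card_pos.ne'⟩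
  have hμroots : μ ≤ rootsOfUnity (Nat.card G) ℂ := by
    rintro u ⟨g, hg, hge⟩
    have hg1 : g ^ (Nat.card G) = 1 := by
      have h1 : ((⟨g, hg.1⟩ : G) : V ≃ₗᵢ[ℂ] V) ^ (Nat.card G) = ((1 : G) : V ≃ₗᵢ[ℂ] V) := by
        norm_cast
        exact pow_card_eq_one'
      simpa using h1
    have hp := pow_apply_eig g a u hge (Nat.card G)
    rw [hg1] at hp
    have h2 : ((u ^ (Nat.card G) : ℂˣ) : ℂ) = 1 := by
      apply hsmulinj
      rw [one_smul, ← hp]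
      rfl
    exact (mem_rootsOfUnity _ _).mpr (Units.ext h2)
  haveI hμfin : Finite ↥μ :=
    Finite.of_injective (Subgroup.inclusion hμroots) (Subgroup.inclusion_injective hμroots)
  -- ζu has order k
  have hζuk : ζu ^ k = 1 := by
    have h1 : r ^ k = 1 := by rw [← hk]; exact pow_orderOf_eq_one r
    have hp := pow_apply_eig r a ζu hrau k
    rw [h1] at hp
    refine Units.ext ?_
    apply hsmulinj
    rw [Units.val_one, one_smul, ← hp]
    rfl
  have hfix_le : ∀ j : ℕ, fixedBy r ≤ fixedBy (r ^ j) := by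
    intro j v hv
    have hv' : r v = v := hv
    show (r ^ j) v = v
    induction j with
    | zero => rfl
    | succ n ih =>
      have h1 : (r ^ (n + 1)) v = (r ^ n) (r v) := by rw [pow_succ]; rfl
      rw [h1, hv', ih]
  have hanotfix : a ∉ fixedBy r := by
    intro hfx
    have h1 : r a = a := hfx
    rw [hra] at h1
    exact hζ (hsmulinj ζ 1 (by rwa [one_smul]))
  have hWtop : fixedBy r ⊔ (ℂ ∙ a) = ⊤ := by
    have hlt : fixedBy r < fixedBy r ⊔ (ℂ ∙ a) := by
      refine lt_of_le_of_ne le_sup_left ?_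
      intro heq
      apply hanotfix
      rw [heq]
      exact Submodule.mem_sup_right (Submodule.mem_span_singleton_self a)
    have h1 : finrank ℂ (fixedBy r) < finrank ℂ ↥(fixedBy r ⊔ (ℂ ∙ a)) :=
      Submodule.finrank_lt_finrank_of_lt hlt
    have hn1 : 1 ≤ finrank ℂ V := by
      haveI : Nontrivial V := ⟨a, 0, ha⟩
      exact Module.finrank_pos
    have h2 := hr.2
    have h3 : finrank ℂ ↥(fixedBy r ⊔ (ℂ ∙ a)) ≤ finrank ℂ V := Submodule.finrank_le _
    apply Submodule.eq_top_of_finrank_eq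
    omega
  have hordζ : orderOf ζu = k := by
    have hdvd1 : orderOf ζu ∣ k := orderOf_dvd_of_pow_eq_one hζuk
    have hfin : IsOfFinOrder ζu :=
      isOfFinOrder_iff_pow_eq_one.mpr ⟨k, Nat.pos_of_ne_zero hk0, hζuk⟩
    have hj0 : orderOf ζu ≠ 0 := hfin.orderOf_pos.ne'
    have hrj : r ^ (orderOf ζu) = 1 := by
      have haj : (r ^ (orderOf ζu)) a = a := by
        rw [pow_apply_eig r a ζu hrau (orderOf ζu), pow_orderOf_eq_one]
        simp
      have hle : fixedBy r ⊔ (ℂ ∙ a) ≤ fixedBy (r ^ (orderOf ζu)) := by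
        refine sup_le (hfix_le _) ?_
        rw [Submodule.span_singleton_le_iff_mem]
        exact haj
      rw [hWtop] at hle
      apply LinearIsometryEquiv.ext
      intro v
      exact hle Submodule.mem_top
    have hdvd2 : k ∣ orderOf ζu := hk ▸ orderOf_dvd_of_pow_eq_one hrj
    exact Nat.dvd_antisymm hdvd1 hdvd2
  -- μ = A ⊔ B
  have hNle : normIn G (Subgroup.zpowers r) ≤ eigIn a (A ⊔ B) := by
    rw [← hcompl.2]
    refine sup_le ?_ ?_
    · rw [Subgroup.zpowers_le]
      exact ⟨ζu, Subgroup.mem_sup_left (Subgroup.mem_zpowers ζu), hrau⟩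
    · intro h hh
      obtain ⟨u, hu⟩ := hHeig h hh
      exact ⟨u, Subgroup.mem_sup_right ⟨h, hh, hu⟩, hu⟩
  have hμAB : μ = A ⊔ B := by
    apply le_antisymm
    · rintro u ⟨g, hg, hge⟩
      obtain ⟨u', hu', hge'⟩ := hNle hg
      have h1 : u = u' := Units.ext (hsmulinj _ _ (hge.symm.trans hge'))
      rw [h1]; exact hu'
    · refine sup_le ?_ ?_
      · rw [Subgroup.zpowers_le]
        exact ⟨r, hrN, hrau⟩
      · rintro u ⟨h, hh, hu⟩
        exact ⟨h, hHN hh, hu⟩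
  -- A ⊓ B = ⊥
  have hzp := zpow_apply_eig r a ζu hrau
  have hAB : A ⊓ B = ⊥ := by
    rw [eq_bot_iff]
    rintro u ⟨huA, huB⟩
    obtain ⟨i, hi⟩ := Subgroup.mem_zpowers_iff.mp huA
    obtain ⟨h, hh, he⟩ := huB
    rw [← hi] at he
    have hga : (r ^ (-i) * h) a = a := by
      show (r ^ (-i)) (h a) = a
      rw [he, map_smul, hzp (-i), smul_smul, ← Units.val_mul, ← zpow_add]
      simp
    have hgH : r ^ (-i) * h ∈ setStab G D := by
      have hgG : r ^ (-i) * h ∈ G := G.mul_mem (G.zpow_mem hrG _) hh.1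
      have hfixD : ∀ v ∈ D, (r ^ (-i) * h) v = v := by
        intro v hv
        obtain ⟨c, rfl⟩ := hD v hv
        rw [map_smul, hga]
      refine ⟨hgG, fun v => ?_⟩
      constructor
      · intro hv; rw [hfixD v hv]; exact hv
      · intro hv
        have h2 := hfixD _ hv
        have h3 : (r ^ (-i) * h) v = v := (r ^ (-i) * h).injective h2
        rwa [h3] at hv
    have hrH : r ^ (-i) ∈ setStab G D := by
      have heq : r ^ (-i) = (r ^ (-i) * h) * h⁻¹ := by group
      rw [heq]
      exact Subgroup.mul_mem _ hgH ((setStab G D).inv_mem hh)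
    have hmem : r ^ (-i) ∈ setStab G D ⊓ Subgroup.zpowers r :=
      ⟨hrH, Subgroup.zpow_mem _ (Subgroup.mem_zpowers r) _⟩
    rw [hcompl.1, Subgroup.mem_bot] at hmem
    have ha1 : ((ζu ^ (-i) : ℂˣ) : ℂ) • a = a := by
      rw [← hzp (-i), hmem]
      rfl
    have h4 : (ζu ^ (-i) : ℂˣ) = 1 := Units.ext (hsmulinj _ 1 (by rwa [one_smul]))
    have h5 : (ζu ^ i)⁻¹ = 1 := by rwa [← zpow_neg]
    rw [Subgroup.mem_bot, ← hi]
    exact inv_eq_one.mp h5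
  -- cardinalities
  have hcardA : Nat.card A = k := by rw [hAdef, Nat.card_zpowers, hordζ]
  have hBle : B ≤ μ := by rw [hμAB]; exact le_sup_right
  haveI hBfin : Finite ↥B :=
    Finite.of_injective (Subgroup.inclusion hBle) (Subgroup.inclusion_injective hBle)
  have hm₀pos : 0 < Nat.card B := Nat.card_pos
  set m₀ := Nat.card B with hm₀def
  have hmmeq : mm = k * m₀ := by
    rw [hmmμ, hμAB, cardSupAux A B hAB, hcardA]
  set d := Nat.gcd k m₀ with hddef
  have hdk : d ∣ k := Nat.gcd_dvd_left _ _
  have hdm : d ∣ m₀ := Nat.gcd_dvd_right _ _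
  have hd0 : d ≠ 0 := fun h0 => hk0 (Nat.eq_zero_of_gcd_eq_zero_left h0)
  haveI : NeZero d := ⟨hd0⟩
  haveI : IsCyclic ↥B := subgroup_units_cyclic B
  obtain ⟨y₀, hy₀⟩ := IsCyclic.exists_generator (α := ↥B)
  have hordy₀ : orderOf (y₀ : ℂˣ) = m₀ := by
    rw [Subgroup.orderOf_coe, orderOf_eq_card_of_forall_mem_zpowers hy₀]
  have hmd0 : m₀ / d ≠ 0 := by
    intro h0
    have := Nat.div_mul_cancel hdm
    rw [h0, zero_mul] at this
    exact hm₀pos.ne' this.symm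
  set y : ℂˣ := (y₀ : ℂˣ) ^ (m₀ / d) with hydef
  have hordy : orderOf y = d := by
    rw [hydef, orderOf_pow' _ hmd0, hordy₀, Nat.gcd_eq_right (Nat.div_dvd_of_dvd hdm),
      Nat.div_div_self hdm hm₀pos.ne']
  have hy1 : y ^ d = 1 := by rw [← hordy]; exact pow_orderOf_eq_one y
  have hzyroots : Subgroup.zpowers y ≤ rootsOfUnity d ℂ := by
    rw [Subgroup.zpowers_le]
    exact (mem_rootsOfUnity _ _).mpr hy1
  have hroots_eq : Subgroup.zpowers y = rootsOfUnity d ℂ := by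
    apply Subgroup.eq_of_le_of_card_ge hzyroots
    rw [Nat.card_zpowers, hordy, Complex.card_rootsOfUnity]
  have hyB : y ∈ B := by
    rw [hydef]
    exact B.pow_mem y₀.2 _
  have hzyB : Subgroup.zpowers y ≤ B := Subgroup.zpowers_le.mpr hyB
  have hx : ζu ^ (k / d) ∈ A ⊓ B := by
    constructor
    · exact Subgroup.pow_mem _ (Subgroup.mem_zpowers ζu) _
    · apply hzyB
      rw [hroots_eq]
      refine (mem_rootsOfUnity _ _).mpr ?_
      rw [← pow_mul, Nat.div_mul_cancel hdk, hζuk]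
  rw [hAB, Subgroup.mem_bot] at hx
  have hkd : k ∣ k / d := by
    have := orderOf_dvd_of_pow_eq_one hx
    rwa [hordζ] at this
  have hkd2 : k / d ∣ k := Nat.div_dvd_of_dvd hdk
  have hkdk : k / d = k := Nat.dvd_antisymm hkd2 hkd
  have hd1 : d = 1 := by
    have h2 : k / (k / d) = d := Nat.div_div_self hdk hk0
    rw [hkdk, Nat.div_self (Nat.pos_of_ne_zero hk0)] at h2
    exact h2.symm
  have hmmk : mm / k = m₀ := by
    rw [hmmeq, Nat.mul_div_cancel_left _ (Nat.pos_of_ne_zero hk0)]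
  rw [hmmk]
  rw [Nat.Coprime, Nat.gcd_comm, ← hddef]
  exact hd1
end

section
/- Let P = ⟨r⟩ be a rank 1 parabolic subgroup of a finite unitary reflection group G, with r of order k. Let d be the order of the image of the determinant homomorphism det : N_G(P) → C^×. If k and d/k are coprime, then N_G(P) = P × H where H = {g ∈ N_G(P) : det(g)^{d/k} = 1}. -/
open Module Submodule

variable {V : Type*} [NormedAddCommGroup V] [InnerProductSpace ℂ V] [FiniteDimensional ℂ V]

/-- The homomorphism sending a unitary transformation to its underlying linear
automorphism. -/
def toLinEquivHom : (V ≃ₗᵢ[ℂ] V) →* (V ≃ₗ[ℂ] V) where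
  toFun g := g.toLinearEquiv
  map_one' := rfl
  map_mul' := fun _ _ => rfl


section Aux

variable {V : Type*} [NormedAddCommGroup V] [InnerProductSpace ℂ V] [FiniteDimensional ℂ V]

lemma mem_fixedBy_iff {g : V ≃ₗᵢ[ℂ] V} {v : V} : v ∈ fixedBy g ↔ g v = v := Iff.rfl

/-- Key geometric lemma: the determinant of a unitary reflection has the same order
as the reflection itself. -/
lemma orderOf_det_reflection (r : V ≃ₗᵢ[ℂ] V) (hr : IsReflection r) :
    orderOf (LinearEquiv.det (toLinEquivHom r)) = orderOf r := by
  classical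
  by_cases h0 : Subsingleton V
  · have hr1 : r = 1 := LinearIsometryEquiv.ext fun v => Subsingleton.elim _ _
    rw [hr1]
    have : toLinEquivHom (1 : V ≃ₗᵢ[ℂ] V) = 1 := rfl
    rw [this, map_one, orderOf_one, orderOf_one]
  rw [not_subsingleton_iff_nontrivial] at h0
  set W : Submodule ℂ V := fixedBy r with hWdef
  have hWr : ∀ w ∈ W, r w = w := fun w hw => hw
  have hcompl : IsCompl W Wᗮ := W.isCompl_orthogonal
  have hfr : finrank ℂ W + finrank ℂ Wᗮ = finrank ℂ V := W.finrank_add_finrank_orthogonal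
  have hrank : finrank ℂ W = finrank ℂ V - 1 := hr.2
  have hVpos : 0 < finrank ℂ V := Module.finrank_pos
  have h1perp : finrank ℂ Wᗮ = 1 := by omega
  haveI : Nontrivial Wᗮ := Module.finrank_pos_iff (R := ℂ) |>.mp (by omega)
  obtain ⟨v, hvmem, hv0⟩ : ∃ x ∈ Wᗮ, x ≠ (0 : V) := by
    obtain ⟨w, hw⟩ := exists_ne (0 : Wᗮ)
    exact ⟨(w : V), w.2, fun h => hw (Subtype.ext h)⟩
  have hspan : (ℂ ∙ v) = Wᗮ :=
    Submodule.eq_of_le_of_finrank_eq ((Submodule.span_singleton_le_iff_mem _ _).2 hvmem)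
      (by rw [finrank_span_singleton hv0, h1perp])
  have hrperp : ∀ u ∈ Wᗮ, r u ∈ Wᗮ := by
    intro u hu
    rw [Submodule.mem_orthogonal]
    intro w hw
    have h := r.inner_map_map w u
    rw [hWr w hw] at h
    rw [h]
    exact (Submodule.mem_orthogonal _ _).1 hu w hw
  obtain ⟨ζ, hζ⟩ : ∃ c : ℂ, c • v = r v := by
    have h := hrperp v hvmem
    rw [← hspan] at h
    exact Submodule.mem_span_singleton.1 h
  have hscal : ∀ u ∈ Wᗮ, r u = ζ • u := by
    intro u hu
    rw [← hspan] at hu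
    obtain ⟨c, rfl⟩ := Submodule.mem_span_singleton.1 hu
    rw [map_smul, ← hζ, smul_smul, smul_smul, mul_comm]
  have hpow : ∀ n : ℕ, ∀ u ∈ Wᗮ, (r ^ n) u = ζ ^ n • u := by
    intro n
    induction n with
    | zero => intro u _; simp
    | succ n ih =>
      intro u hu
      have h1 : (r ^ (n + 1)) u = (r ^ n) (r u) := by rw [pow_succ]; rfl
      rw [h1, hscal u hu, map_smul, ih u hu, smul_smul, ← pow_succ']
  have hpowW : ∀ n : ℕ, ∀ w ∈ W, (r ^ n) w = w := by
    intro n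
    induction n with
    | zero => intro w _; simp
    | succ n ih =>
      intro w hw
      have h1 : (r ^ (n + 1)) w = (r ^ n) (r w) := by rw [pow_succ]; rfl
      rw [h1, hWr w hw, ih w hw]
  have hiff : ∀ n : ℕ, r ^ n = 1 ↔ ζ ^ n = 1 := by
    intro n
    constructor
    · intro h
      have h2 := hpow n v hvmem
      rw [h] at h2
      have h3 : ((1 : V ≃ₗᵢ[ℂ] V) v) = v := rfl
      rw [h3] at h2
      have h4 : (ζ ^ n - 1) • v = 0 := by
        rw [sub_smul, one_smul, ← h2, sub_self]
      rcases smul_eq_zero.1 h4 with h5 | h5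
      · exact sub_eq_zero.1 h5
      · exact absurd h5 hv0
    · intro h
      ext x
      have hx : x ∈ W ⊔ Wᗮ := by rw [hcompl.sup_eq_top]; trivial
      obtain ⟨w, hw, u, hu, rfl⟩ := Submodule.mem_sup.1 hx
      have : (r ^ n) (w + u) = w + u := by
        rw [map_add, hpowW n w hw, hpow n u hu, h, one_smul]
      simpa using this
  -- determinant computation
  have hdet : LinearMap.det (r.toLinearEquiv : V →ₗ[ℂ] V) = ζ := by
    set m := finrank ℂ W with hm
    let bW : Basis (Fin m) ℂ W := Module.finBasis ℂ W
    let bU : Basis (Fin 1) ℂ Wᗮ := Module.finBasisOfFinrankEq ℂ Wᗮ h1perp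
    let e : (W × Wᗮ) ≃ₗ[ℂ] V := Submodule.prodEquivOfIsCompl W Wᗮ hcompl
    let B : Basis (Fin m ⊕ Fin 1) ℂ V := (bW.prod bU).map e
    have hBl : ∀ i, B (Sum.inl i) = (bW i : V) := by
      intro i
      show e ((bW.prod bU) (Sum.inl i)) = _
      rw [Submodule.coe_prodEquivOfIsCompl', Basis.prod_apply_inl_fst,
        Basis.prod_apply_inl_snd]
      simp
    have hBr : ∀ i, B (Sum.inr i) = (bU i : V) := by
      intro i
      show e ((bW.prod bU) (Sum.inr i)) = _
      rw [Submodule.coe_prodEquivOfIsCompl', Basis.prod_apply_inr_fst,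
        Basis.prod_apply_inr_snd]
      simp
    have hrB : ∀ j, (r.toLinearEquiv : V →ₗ[ℂ] V) (B j) =
        (Sum.elim (fun _ : Fin m => (1 : ℂ)) (fun _ : Fin 1 => ζ) j) • B j := by
      rintro (i | i)
      · have : (r.toLinearEquiv : V →ₗ[ℂ] V) (B (Sum.inl i)) = r (B (Sum.inl i)) := rfl
        rw [this, hBl, hWr _ (bW i).2]
        simp [hBl]
      · have : (r.toLinearEquiv : V →ₗ[ℂ] V) (B (Sum.inr i)) = r (B (Sum.inr i)) := rfl
        rw [this, hBr, hscal _ (bU i).2]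
        simp [hBr]
    rw [← LinearMap.det_toMatrix B]
    have hmat : LinearMap.toMatrix B B (r.toLinearEquiv : V →ₗ[ℂ] V) =
        Matrix.diagonal (Sum.elim (fun _ : Fin m => (1 : ℂ)) (fun _ : Fin 1 => ζ)) := by
      ext i j
      rw [LinearMap.toMatrix_apply, hrB j, map_smul, Basis.repr_self]
      rcases eq_or_ne i j with rfl | hne
      · simp [Matrix.diagonal_apply_eq]
      · simp [Matrix.diagonal_apply_ne _ hne, Finsupp.single_apply, Ne.symm hne]
    rw [hmat, Matrix.det_diagonal, Fintype.prod_sum_type]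
    simp
  have hu : ((LinearEquiv.det (toLinEquivHom r) : ℂˣ) : ℂ) = ζ := by
    rw [LinearEquiv.coe_det]; exact hdet
  rw [orderOf_eq_orderOf_iff]
  intro n
  rw [hiff n, ← hu, Units.ext_iff, Units.val_pow_eq_pow_val, Units.val_one]

end Aux

/-- Lemma `lemma:det`: if `k` and `d/k` are coprime, where `d` is the order
of the image of `det` on `N_G(P)`, then `N_G(P) = P × H` with
`H = {g ∈ N_G(P) : det(g)^{d/k} = 1}`. -/
theorem normalizer_rank_one_direct_product_det
    (G : Subgroup (V ≃ₗᵢ[ℂ] V)) [Finite G] (hG : IsReflectionGroup G)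
    (r : V ≃ₗᵢ[ℂ] V) (hr : IsReflection r) (hrG : r ∈ G) (k : ℕ) (hk : orderOf r = k)
    (hpar : ∃ X : Set V, Subgroup.zpowers r = pointStab G X)
    (d : ℕ)
    (hd : d = Nat.card (Subgroup.map (LinearEquiv.det.comp toLinEquivHom)
      (normIn G (Subgroup.zpowers r))))
    (hcop : Nat.Coprime k (d / k)) :
    Subgroup.zpowers r ⊓
        (normIn G (Subgroup.zpowers r) ⊓
          ((powMonoidHom (d / k)).comp (LinearEquiv.det.comp toLinEquivHom)).ker) = ⊥ ∧
    Subgroup.zpowers r ⊔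
        (normIn G (Subgroup.zpowers r) ⊓
          ((powMonoidHom (d / k)).comp (LinearEquiv.det.comp toLinEquivHom)).ker) =
      normIn G (Subgroup.zpowers r) ∧
    ∀ x ∈ Subgroup.zpowers r,
      ∀ y ∈ normIn G (Subgroup.zpowers r) ⊓
          ((powMonoidHom (d / k)).comp (LinearEquiv.det.comp toLinEquivHom)).ker,
        Commute x y := by
  classical
  set F : (V ≃ₗᵢ[ℂ] V) →* ℂˣ := LinearEquiv.det.comp toLinEquivHom with hF
  set P : Subgroup (V ≃ₗᵢ[ℂ] V) := Subgroup.zpowers r with hP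
  set N : Subgroup (V ≃ₗᵢ[ℂ] V) := normIn G P with hN
  set ζu : ℂˣ := F r with hζu
  have hk0 : k ≠ 0 := by
    rw [← hk]; exact (hr.1.orderOf_pos).ne'
  haveI : NeZero k := ⟨hk0⟩
  have horder : orderOf ζu = k := by
    rw [hζu, hF]
    show orderOf (LinearEquiv.det (toLinEquivHom r)) = k
    rw [orderOf_det_reflection r hr, hk]
  have hrN : r ∈ N := by
    rw [hN, normIn, Subgroup.mem_inf]
    exact ⟨hrG, Subgroup.le_normalizer (Subgroup.mem_zpowers r)⟩
  have hkd : k ∣ d := by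
    rw [hd, ← horder]
    exact Subgroup.orderOf_dvd_natCard _ (Subgroup.mem_map_of_mem F hrN)
  have hdkk : d / k * k = d := Nat.div_mul_cancel hkd
  have hζk : ζu ^ (k : ℤ) = 1 := by
    rw [zpow_natCast, ← horder, pow_orderOf_eq_one]
  have hrzpow : ∀ n : ℤ, (k : ℤ) ∣ n → r ^ n = 1 := by
    intro n hn
    rw [← orderOf_dvd_iff_zpow_eq_one, hk]; exact hn
  have hζdvd : ∀ n : ℤ, ζu ^ n = 1 → (k : ℤ) ∣ n := by
    intro n hn
    rw [← horder]; exact orderOf_dvd_iff_zpow_eq_one.2 hn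
  have hcopZ : IsCoprime (k : ℤ) ((d / k : ℕ) : ℤ) := by
    rw [Nat.isCoprime_iff_coprime]; exact hcop
  have hker : ∀ g : V ≃ₗᵢ[ℂ] V,
      g ∈ ((powMonoidHom (d / k)).comp F).ker ↔ (F g) ^ (d / k) = 1 := by
    intro g
    rw [MonoidHom.mem_ker, MonoidHom.comp_apply, powMonoidHom_apply]
  -- the commuting statement first
  have hcomm : ∀ y ∈ N, Commute r y := by
    intro y hy
    have hyN : y ∈ Subgroup.normalizer (P : Set (V ≃ₗᵢ[ℂ] V)) := (Subgroup.mem_inf.1 hy).2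
    have hconj : y * r * y⁻¹ ∈ P :=
      (Subgroup.mem_normalizer_iff.1 hyN r).1 (Subgroup.mem_zpowers r)
    obtain ⟨j, hj⟩ := Subgroup.mem_zpowers_iff.1 hconj
    have hdetc : ζu ^ j = ζu := by
      have h1 := congrArg F hj
      rw [map_zpow, map_mul, map_mul, map_inv, mul_comm (F y) (F r),
        mul_inv_cancel_right] at h1
      exact h1
    have h2 : ζu ^ (j - 1) = 1 := by
      rw [zpow_sub, zpow_one, hdetc, mul_inv_cancel]
    have h3 : r ^ (j - 1) = 1 := hrzpow _ (hζdvd _ h2)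
    have h4 : r ^ j = r := by
      have := congrArg (· * r) h3
      simpa [zpow_sub, zpow_one, one_mul] using this
    rw [h4] at hj
    have h5 : r * y = y * r := by
      have := congrArg (· * y) hj
      simpa [inv_mul_cancel_right] using this
    exact h5
  have hsub1 : P ≤ N := Subgroup.zpowers_le.2 hrN
  refine ⟨?_, ?_, ?_⟩
  · rw [eq_bot_iff]
    intro x hx
    rw [Subgroup.mem_inf] at hx
    obtain ⟨hx1, hx2⟩ := hx
    rw [Subgroup.mem_inf] at hx2
    obtain ⟨m, rfl⟩ := Subgroup.mem_zpowers_iff.1 hx1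
    have hx3 : (F (r ^ m)) ^ (d / k) = 1 := (hker _).1 hx2.2
    have hx4 : ζu ^ (m * ((d / k : ℕ) : ℤ)) = 1 := by
      rw [zpow_mul, zpow_natCast]
      rw [map_zpow] at hx3
      exact hx3
    have hx5 : (k : ℤ) ∣ m := hcopZ.dvd_of_dvd_mul_right (hζdvd _ hx4)
    rw [Subgroup.mem_bot]
    exact hrzpow m hx5
  · apply le_antisymm
    · exact sup_le hsub1 inf_le_left
    · intro g hg
      set x : ℂˣ := (F g) ^ (d / k) with hxdef
      have hgd : (F g) ^ d = 1 := by
        have h1 : orderOf (F g) ∣ d := by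
          rw [hd]
          exact Subgroup.orderOf_dvd_natCard _ (Subgroup.mem_map_of_mem F hg)
        exact orderOf_dvd_iff_pow_eq_one.1 h1
      have hxk : x ^ k = 1 := by
        rw [hxdef, ← pow_mul, hdkk, hgd]
      have hxmem : x ∈ Subgroup.zpowers ζu := by
        have hprim : IsPrimitiveRoot ζu k := horder ▸ IsPrimitiveRoot.orderOf ζu
        rw [hprim.zpowers_eq]
        exact (mem_rootsOfUnity k x).2 hxk
      obtain ⟨m, hm⟩ := Subgroup.mem_zpowers_iff.1 hxmem
      obtain ⟨a, b, hab⟩ := hcopZ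
      have hbezout : b * ((d / k : ℕ) : ℤ) = 1 - a * k := by linarith
      set p : V ≃ₗᵢ[ℂ] V := r ^ (m * b) with hp
      have hFp : (F p) ^ (d / k) = x := by
        rw [hp, map_zpow, ← zpow_natCast (ζu ^ (m * b)), ← zpow_mul]
        have : m * b * ((d / k : ℕ) : ℤ) = m * (1 - a * k) := by
          rw [mul_assoc, hbezout]
        rw [this]
        have : ζu ^ (m * (1 - a * k)) = ζu ^ m * (ζu ^ (k : ℤ)) ^ (-(m * a)) := by
          rw [← zpow_mul, ← zpow_add]
          ring_nf
        rw [this, hζk, one_zpow, mul_one, hm]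
      have hpP : p ∈ P := Subgroup.zpow_mem P (Subgroup.mem_zpowers r) _
      have hpN : p ∈ N := hsub1 hpP
      have hhN : p⁻¹ * g ∈ N := N.mul_mem (N.inv_mem hpN) hg
      have hhker : p⁻¹ * g ∈ ((powMonoidHom (d / k)).comp F).ker := by
        rw [hker, map_mul, map_inv, mul_pow, inv_pow, hFp, hxdef,
          inv_mul_cancel]
      have : g = p * (p⁻¹ * g) := by group
      rw [this]
      exact Subgroup.mul_mem_sup hpP (Subgroup.mem_inf.2 ⟨hhN, hhker⟩)
  · intro x hx y hy
    obtain ⟨m, rfl⟩ := Subgroup.mem_zpowers_iff.1 hx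
    have hyN : y ∈ N := (Subgroup.mem_inf.1 hy).1
    exact (hcomm y hyN).zpow_left m
end

section
/- Let G = G(m,p,n) with n ≥ 2 act on C^n, and let Ξ = (Λ_0, Π, ξ) with Λ_0 a subset of the orthonormal basis Λ, Π = (Λ_1,...,Λ_d) a partition of Λ \ Λ_0, and ξ : Λ \ Λ_0 → μ_m. Then the subgroup P_Ξ = P_0 × P_1 × ⋯ × P_d, where P_0 = G(m,p,|Λ_0|) acts on the span of Λ_0 and P_i ≅ Sym(|Λ_i|) permutes the vectors {ξ(e)e : e ∈ Λ_i}, is the pointwise stabiliser in G of the span of the vectors Σ_{e∈Λ_i} ξ(e)e for 1 ≤ i ≤ d; in particular P_Ξ is a parabolic subgroup of G. -/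
open Module Submodule

noncomputable section

variable {V : Type*} [NormedAddCommGroup V] [InnerProductSpace ℂ V] [FiniteDimensional ℂ V]

lemma smul_single_eq_iff' {n : ℕ} {a b : Fin n} {c c' : ℂ} (hc : c ≠ 0)
    (h : c • EuclideanSpace.single a (1 : ℂ) = c' • EuclideanSpace.single b 1) :
    a = b ∧ c = c' := by
  have ha := congrArg (fun v => v a) h
  beta_reduce at ha
  simp only [PiLp.smul_apply, EuclideanSpace.single_apply, smul_eq_mul, if_pos rfl,
    mul_one, mul_ite, mul_zero] at ha
  by_cases hab : a = b
  · subst hab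
    simp at ha
    exact ⟨rfl, ha⟩
  · rw [if_neg hab] at ha
    exact absurd ha hc

/-- the pointwise stabiliser in `G(m,p,n)` of the span of the vectors
`v_i = ∑_{e ∈ Λ_i} ξ(e) e` consists exactly of those elements of `G(m,p,n)` which permute
each of the sets `{ξ(e)e : e ∈ Λ_i}` (and hence preserve the span of `Λ₀`, acting there as
`G(m,p,|Λ₀|)`); in particular the product group `P_Ξ` is this parabolic subgroup. -/
theorem parabolic_of_Gmpn_eq (m p n : ℕ) (hm : 0 < m) (hp : p ∣ m) (hn : 2 ≤ n)
    (Λ₀ : Finset (Fin n)) (d : ℕ) (B : Fin d → Finset (Fin n))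
    (hdisj : ∀ i j, i ≠ j → Disjoint (B i) (B j))
    (hne : ∀ i, (B i).Nonempty)
    (hcover : Finset.univ.biUnion B = Λ₀ᶜ)
    (ξ : Fin n → ℂ) (hξ : ∀ e, ξ e ^ m = 1)
    (hm1 : m = 1 → Λ₀ = ∅) :
    (pointStab (Gmpn m p n) (Submodule.span ℂ
        (Set.range fun i => ∑ e ∈ B i, ξ e • EuclideanSpace.single e (1 : ℂ)) : Set _) :
        Set (EuclideanSpace ℂ (Fin n) ≃ₗᵢ[ℂ] EuclideanSpace ℂ (Fin n))) =
      {g | g ∈ Gmpn m p n ∧ ∀ i, ∀ e ∈ B i, ∃ e' ∈ B i,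
        g (ξ e • EuclideanSpace.single e 1) = ξ e' • EuclideanSpace.single e' 1} := by
  have hξ0 : ∀ e, ξ e ≠ 0 := by
    intro e h0
    have := hξ e
    rw [h0, zero_pow hm.ne'] at this
    exact zero_ne_one this
  ext g
  simp only [SetLike.mem_coe, Set.mem_setOf_eq]
  constructor
  · rintro ⟨hgG, hfix⟩
    obtain ⟨σ, θ, h1, h2, h3⟩ := id hgG
    have hg1 : ∀ (c : ℂ) (e : Fin n), g (c • EuclideanSpace.single e (1 : ℂ)) =
        (c * θ e) • EuclideanSpace.single (σ e) 1 := by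
      intro c e
      rw [map_smul, h3, euclid_single_eq_smul, smul_smul]
    refine ⟨hgG, fun i e he => ?_⟩
    have hgv : g (∑ e ∈ B i, ξ e • EuclideanSpace.single e (1 : ℂ)) =
        ∑ e ∈ B i, ξ e • EuclideanSpace.single e 1 :=
      hfix _ (Submodule.subset_span ⟨i, rfl⟩)
    rw [map_sum] at hgv
    simp_rw [hg1] at hgv
    have hval := congrArg (fun v => v (σ e)) hgv
    beta_reduce at hval
    have hL : (∑ e' ∈ B i, (ξ e' * θ e') • EuclideanSpace.single (σ e') (1 : ℂ)) (σ e)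
        = ξ e * θ e := by
      rw [WithLp.ofLp_sum, Finset.sum_apply]
      rw [Finset.sum_eq_single e]
      · simp [EuclideanSpace.single_apply]
      · intro b _ hb
        simp [EuclideanSpace.single_apply, (Ne.symm hb : e ≠ b)]
      · exact fun h => absurd he h
    have hR : (∑ e' ∈ B i, ξ e' • EuclideanSpace.single e' (1 : ℂ)) (σ e)
        = if σ e ∈ B i then ξ (σ e) else 0 := by
      rw [WithLp.ofLp_sum, Finset.sum_apply]
      by_cases hmem : σ e ∈ B i
      · rw [if_pos hmem, Finset.sum_eq_single (σ e)]
        · simp [EuclideanSpace.single_apply]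
        · intro b _ hb
          simp [EuclideanSpace.single_apply, Ne.symm hb]
        · exact fun h => absurd hmem h
      · rw [if_neg hmem]
        apply Finset.sum_eq_zero
        intro b hb
        have : σ e ≠ b := fun h => hmem (h ▸ hb)
        simp [EuclideanSpace.single_apply, this]
    rw [hL, hR] at hval
    have hne0 : ξ e * θ e ≠ 0 := mul_ne_zero (hξ0 e) (θ e).ne_zero
    by_cases hmem : σ e ∈ B i
    · rw [if_pos hmem] at hval
      exact ⟨σ e, hmem, by rw [hg1, ← hval]⟩
    · rw [if_neg hmem] at hval
      exact absurd hval hne0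
  · rintro ⟨hgG, hperm⟩
    obtain ⟨σ, θ, h1, h2, h3⟩ := id hgG
    have hg1 : ∀ (c : ℂ) (e : Fin n), g (c • EuclideanSpace.single e (1 : ℂ)) =
        (c * θ e) • EuclideanSpace.single (σ e) 1 := by
      intro c e
      rw [map_smul, h3, euclid_single_eq_smul, smul_smul]
    refine ⟨hgG, fun x hx => ?_⟩
    induction hx using Submodule.span_induction with
    | zero => exact map_zero g
    | add x y _ _ hx hy => rw [map_add, hx, hy]
    | smul c x _ hx => rw [map_smul, hx]
    | mem x hx =>
      obtain ⟨i, rfl⟩ := hx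
      have key : ∀ e ∈ B i, σ e ∈ B i ∧ ξ (σ e) = ξ e * θ e := by
        intro e he
        obtain ⟨e', he', heq⟩ := hperm i e he
        rw [hg1] at heq
        obtain ⟨hab, hc⟩ := smul_single_eq_iff'
          (mul_ne_zero (hξ0 e) (θ e).ne_zero) heq
        exact ⟨by rw [hab]; exact he', by rw [hab]; exact hc.symm⟩
      rw [map_sum]
      simp_rw [hg1]
      have h4 : ∀ e ∈ B i, (ξ e * θ e) • EuclideanSpace.single (σ e) (1 : ℂ)
          = ξ (σ e) • EuclideanSpace.single (σ e) 1 := by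
        intro e he
        rw [(key e he).2]
      rw [Finset.sum_congr rfl h4]
      have himg : Finset.image σ (B i) = B i := by
        apply Finset.eq_of_subset_of_card_le
        · intro b hb
          obtain ⟨a, ha, rfl⟩ := Finset.mem_image.mp hb
          exact (key a ha).1
        · rw [Finset.card_image_of_injective _ σ.injective]
      calc ∑ x ∈ B i, ξ (σ x) • EuclideanSpace.single (σ x) (1 : ℂ)
          = ∑ x ∈ Finset.image σ (B i), ξ x • EuclideanSpace.single x (1 : ℂ) :=
            (Finset.sum_image (f := fun x => ξ x • EuclideanSpace.single x (1 : ℂ)) (fun a _ b _ h => σ.injective h)).symm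
        _ = ∑ x ∈ B i, ξ x • EuclideanSpace.single x (1 : ℂ) := by rw [himg]
end
end
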